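/- arXiv:2404.13510 — 10 statements merged into one kernel-verified Lean document; each statement's English description precedes it below -/
import Mathlib

section
/- Let (X, ⪯) be a countably infinite totally ordered set. There exists a chaotic bijection f : ℤ → X if and only if X has no isolated points. -/
/-!
Necessity. If `f` is a chaotic bijection and `y ⋖ z` with `f a = y`, `f c = z`, then
`f (a - d)` and `f (a + d)` never lie on opposite sides of the gap between `y` and `z`, and
neither do `f (c - d)` and `f (c + d)`. So `{n | f n ≤ y}` is symmetric about `a` and about `c`,
hence `2 (c - a)`-periodic. At an isolated point `x` both `{n | f n ≤ x}` and `{n | f n < x}`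
are therefore periodic (trivially so if `x` is maximal, resp. minimal), yet they differ exactly
at `f⁻¹ x`.

Sufficiency. Build `f` `2`-adically: at stage `k`, `X` is partitioned into convex pieces without
isolated points indexed by the residues modulo `2 ^ k`; each piece is cut into two such pieces,
one entirely below the other, which go to the two residues modulo `2 ^ (k + 1)` above it. If
`d = 2 ^ t * (odd)`, then `n - d` and `n + d` share their residue modulo `2 ^ (t + 1)` while `n`
lies in the sibling class, so `f n` is not between `f (n - d)` and `f (n + d)`. Along the way the
values on growing windows of consecutive integers are fixed, and at stage `k` the `k`-th point
of an enumeration of `X` is made a value, so that the limit map is a bijection.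
-/

open Set Function

theorem isOpen_singleton_iff_covBy {X : Type*} [LinearOrder X] [TopologicalSpace X]
    [OrderTopology X] {x : X} :
    IsOpen {x} ↔ (IsTop x ∨ ∃ z, x ⋖ z) ∧ (IsBot x ∨ ∃ y, y ⋖ x) := by
  rw [isOpen_singleton_iff_punctured_nhds, ← nhdsLT_sup_nhdsGT, sup_eq_bot_iff,
    nhdsLT_eq_bot_iff, nhdsGT_eq_bot_iff, and_comm]

theorem periodic_of_symmetric_about {α β : Type*} [AddCommGroup α] {g : α → β} {a c : α}
    (ha : ∀ d, g (a - d) = g (a + d)) (hc : ∀ d, g (c - d) = g (c + d)) :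
    Periodic g (2 • (c - a)) := fun n =>
  calc g (n + 2 • (c - a)) = g (c + (c - 2 • a + n)) := by congr 1; abel
    _ = g (c - (c - 2 • a + n)) := (hc _).symm
    _ = g (a + (a - n)) := by congr 1; abel
    _ = g (a - (a - n)) := (ha _).symm
    _ = g n := by rw [sub_sub_cancel]

section Chaotic

variable {X : Type*} [LinearOrder X] {f : ℤ → X}

/-- The paper's chaotic maps are the injective maps with this property. -/
def Chaotic (f : ℤ → X) : Prop :=
  ∀ n d : ℤ, ¬ (f (n - d) < f n ∧ f n < f (n + d))

theorem chaotic_iff_not_exists :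
    Chaotic f ↔ ¬ ∃ a b c : ℤ, f a < f b ∧ f b < f c ∧ (b : ℚ) - a = c - b := by
  constructor
  · rintro hf ⟨a, b, c, hab, hbc, h⟩
    have hc : c = b + (b - a) := by
      have : b - a = c - b := by exact_mod_cast h
      omega
    exact hf b (b - a) ⟨by rwa [sub_sub_cancel], by rwa [← hc]⟩
  · rintro h n d ⟨h₁, h₂⟩
    exact h ⟨n - d, n, n + d, h₁, h₂, by push_cast; ring⟩

namespace Chaotic

theorem le_of_le_of_covBy (hf : Chaotic f) (hinj : Injective f) {y z : X} (hyz : y ⋖ z)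
    {m d : ℤ} (hm : f m = y ∨ f m = z) (hd : f (m - d) ≤ y) : f (m + d) ≤ y := by
  by_contra! h
  rcases eq_or_ne d 0 with rfl | hd₀
  · simp only [sub_zero, add_zero] at hd h
    exact hd.not_gt h
  have hne : ∀ {j : ℤ}, j ≠ 0 → f (m + j) ≠ f m := fun hj h => hj (by simpa using hinj h)
  refine hf m d ⟨?_, ?_⟩
  · refine lt_of_le_of_ne ?_ (by simpa [sub_eq_add_neg] using hne (neg_ne_zero.2 hd₀))
    rcases hm with hm | hm <;> rw [hm]
    exacts [hd, hd.trans hyz.lt.le]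
  · refine lt_of_le_of_ne ?_ (hne hd₀).symm
    rcases hm with hm | hm <;> rw [hm]
    exacts [h.le, hyz.ge_of_gt h]

theorem periodic_le_of_covBy (hf : Chaotic f) (hinj : Injective f) {y z : X} (hyz : y ⋖ z)
    {a c : ℤ} (ha : f a = y) (hc : f c = z) : Periodic (fun n => f n ≤ y) (2 * (c - a)) := by
  have hsymm : ∀ m, (f m = y ∨ f m = z) → ∀ d, (f (m - d) ≤ y) = (f (m + d) ≤ y) :=
    fun m hm d => propext ⟨hf.le_of_le_of_covBy hinj hyz hm, fun h =>
      by simpa [← sub_eq_add_neg] using hf.le_of_le_of_covBy hinj hyz hm (d := -d) (by simpa)⟩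
  simpa using periodic_of_symmetric_about (g := fun n => f n ≤ y)
    (hsymm a (Or.inl ha)) (hsymm c (Or.inr hc))

theorem exists_periodic_le (hf : Chaotic f) (hbij : Bijective f) {x : X}
    (hx : IsTop x ∨ ∃ z, x ⋖ z) : ∃ T ≠ 0, Periodic (fun n => f n ≤ x) T := by
  rcases hx with hx | ⟨z, hxz⟩
  · exact ⟨1, one_ne_zero, fun n => propext (iff_of_true (hx _) (hx _))⟩
  obtain ⟨a, rfl⟩ := hbij.2 x
  obtain ⟨c, rfl⟩ := hbij.2 z
  refine ⟨2 * (c - a), ?_, hf.periodic_le_of_covBy hbij.1 hxz rfl rfl⟩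
  have : c ≠ a := fun h => hxz.lt.ne (by rw [h])
  omega

theorem exists_periodic_lt (hf : Chaotic f) (hbij : Bijective f) {x : X}
    (hx : IsBot x ∨ ∃ y, y ⋖ x) : ∃ T ≠ 0, Periodic (fun n => f n < x) T := by
  rcases hx with hx | ⟨y, hyx⟩
  · exact ⟨1, one_ne_zero, fun n => propext (iff_of_false (hx _).not_gt (hx _).not_gt)⟩
  obtain ⟨T, hT, hper⟩ := hf.exists_periodic_le hbij (x := y) (Or.inr ⟨x, hyx⟩)
  have : (fun n => f n < x) = fun n => f n ≤ y :=
    funext fun n => propext ⟨hyx.le_of_lt, fun h => h.trans_lt hyx.lt⟩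
  exact ⟨T, hT, this ▸ hper⟩

theorem not_isOpen_singleton [TopologicalSpace X] [OrderTopology X] (hf : Chaotic f)
    (hbij : Bijective f) (x : X) : ¬ IsOpen {x} := by
  rw [isOpen_singleton_iff_covBy]
  rintro ⟨hle, hlt⟩
  obtain ⟨S, hS, hSper⟩ := hf.exists_periodic_le hbij hle
  obtain ⟨T, hT, hTper⟩ := hf.exists_periodic_lt hbij hlt
  obtain ⟨a, rfl⟩ := hbij.2 x
  have h₁ : f (a + T * S) ≤ f a := by
    have h := hSper.int_mul T a
    simp only [Int.cast_id] at h
    exact h ▸ le_rfl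
  have h₂ : ¬ f (a + S * T) < f a := by
    have h := hTper.int_mul S a
    simp only [Int.cast_id] at h
    exact h ▸ lt_irrefl _
  rw [mul_comm] at h₂
  have := hbij.1 (le_antisymm h₁ (not_lt.1 h₂))
  exact mul_ne_zero hT hS (add_eq_left.1 this)

end Chaotic

end Chaotic

section PerfectInterval

variable {X : Type*} [LinearOrder X]

def AccFromAbove (P : Set X) (x : X) : Prop :=
  (∃ y ∈ P, x < y) ∧ ∀ y ∈ P, x < y → ∃ w ∈ P, x < w ∧ w < y

def AccFromBelow (P : Set X) (x : X) : Prop :=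
  (∃ y ∈ P, y < x) ∧ ∀ y ∈ P, y < x → ∃ w ∈ P, y < w ∧ w < x

theorem AccFromAbove.mono {P Q : Set X} {x : X} (h : AccFromAbove P x) (hQP : Q ⊆ P)
    (hPQ : P ∩ Ioi x ⊆ Q) : AccFromAbove Q x := by
  obtain ⟨⟨y, hy, hxy⟩, h⟩ := h
  refine ⟨⟨y, hPQ ⟨hy, hxy⟩, hxy⟩, fun y hy hxy => ?_⟩
  obtain ⟨w, hw, hxw, hwy⟩ := h y (hQP hy) hxy
  exact ⟨w, hPQ ⟨hw, hxw⟩, hxw, hwy⟩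

theorem AccFromBelow.mono {P Q : Set X} {x : X} (h : AccFromBelow P x) (hQP : Q ⊆ P)
    (hPQ : P ∩ Iio x ⊆ Q) : AccFromBelow Q x := by
  obtain ⟨⟨y, hy, hyx⟩, h⟩ := h
  refine ⟨⟨y, hPQ ⟨hy, hyx⟩, hyx⟩, fun y hy hyx => ?_⟩
  obtain ⟨w, hw, hyw, hwx⟩ := h y (hQP hy) hyx
  exact ⟨w, hPQ ⟨hw, hwx⟩, hyw, hwx⟩

structure IsPerfectInterval (P : Set X) : Prop where
  ordConnected : P.OrdConnected
  acc : ∀ x ∈ P, AccFromAbove P x ∨ AccFromBelow P x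

theorem isPerfectInterval_univ [TopologicalSpace X] [OrderTopology X]
    (h : ∀ x : X, ¬ IsOpen {x}) : IsPerfectInterval (univ : Set X) where
  ordConnected := ordConnected_univ
  acc x _ := by
    have hx := h x
    rw [isOpen_singleton_iff_covBy, not_and_or] at hx
    refine hx.imp (fun hx => ?_) (fun hx => ?_)
    · simp only [IsTop, not_or, not_forall, not_le, not_exists] at hx
      obtain ⟨⟨y, hy⟩, hcov⟩ := hx
      refine ⟨⟨y, trivial, hy⟩, fun y _ hxy => ?_⟩
      obtain ⟨w, hxw, hwy⟩ := (not_covBy_iff hxy).1 (hcov y)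
      exact ⟨w, trivial, hxw, hwy⟩
    · simp only [IsBot, not_or, not_forall, not_le, not_exists] at hx
      obtain ⟨⟨y, hy⟩, hcov⟩ := hx
      refine ⟨⟨y, trivial, hy⟩, fun y _ hyx => ?_⟩
      obtain ⟨w, hyw, hwx⟩ := (not_covBy_iff hyx).1 (hcov y)
      exact ⟨w, trivial, hyw, hwx⟩

namespace IsPerfectInterval

variable {P : Set X} {c v z : X}

theorem exists_ne (hP : IsPerfectInterval P) (hv : v ∈ P) : ∃ z ∈ P, z ≠ v := by
  rcases hP.acc v hv with ⟨⟨y, hy, hvy⟩, -⟩ | ⟨⟨y, hy, hyv⟩, -⟩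
  exacts [⟨y, hy, hvy.ne'⟩, ⟨y, hy, hyv.ne⟩]

theorem inter_Iio (hP : IsPerfectInterval P) (hc : c ∈ P) : IsPerfectInterval (P ∩ Iio c) where
  ordConnected := hP.ordConnected.inter ordConnected_Iio
  acc x hx := by
    rcases hP.acc x hx.1 with ⟨-, h⟩ | h
    · obtain ⟨w, hw, hxw, hwc⟩ := h c hc hx.2
      refine Or.inl ⟨⟨w, ⟨hw, hwc⟩, hxw⟩, fun y hy hxy => ?_⟩
      obtain ⟨w, hw, hxw, hwy⟩ := h y hy.1 hxy
      exact ⟨w, ⟨hw, hwy.trans hy.2⟩, hxw, hwy⟩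
    · exact Or.inr (h.mono inter_subset_left fun w hw => ⟨hw.1, hw.2.trans hx.2⟩)

theorem inter_Ici (hP : IsPerfectInterval P) (hc : c ∈ P) (hcP : AccFromAbove P c) :
    IsPerfectInterval (P ∩ Ici c) where
  ordConnected := hP.ordConnected.inter ordConnected_Ici
  acc x hx := by
    have above : AccFromAbove P x → AccFromAbove (P ∩ Ici c) x := fun h =>
      h.mono inter_subset_left fun w hw => ⟨hw.1, hx.2.trans hw.2.le⟩
    rcases hx.2.eq_or_lt with rfl | hcx
    · exact Or.inl (above hcP)
    refine (hP.acc x hx.1).imp above fun ⟨_, h⟩ => ⟨⟨c, ⟨hc, le_rfl⟩, hcx⟩, fun y hy hyx => ?_⟩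
    obtain ⟨w, hw, hyw, hwx⟩ := h y hy.1 hyx
    exact ⟨w, ⟨hw, hy.2.trans hyw.le⟩, hyw, hwx⟩

theorem exists_accFromAbove_of_not (hP : IsPerfectInterval P) (hv : v ∈ P) (hz : z ∈ P)
    (hvz : v < z) (hv' : ¬ AccFromAbove P v) : ∃ c ∈ P, v < c ∧ c ≤ z ∧ AccFromAbove P c := by
  simp only [AccFromAbove, not_and, not_forall, not_exists, not_lt] at hv'
  obtain ⟨u, hu, hvu, hgap⟩ := hv' ⟨z, hz, hvz⟩
  refine ⟨u, hu, hvu, hgap z hz hvz, (hP.acc u hu).resolve_right fun ⟨_, h⟩ => ?_⟩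
  obtain ⟨w, hw, hvw, hwu⟩ := h v hv hvu
  exact (hgap w hw hvw).not_gt hwu

theorem exists_accFromAbove (hP : IsPerfectInterval P) (hv : v ∈ P) (hz : z ∈ P)
    (hvz : v < z) : ∃ c ∈ P, v < c ∧ c ≤ z ∧ AccFromAbove P c := by
  by_cases hv' : AccFromAbove P v
  · obtain ⟨w, hw, hvw, hwz⟩ := hv'.2 z hz hvz
    by_cases hw' : AccFromAbove P w
    · exact ⟨w, hw, hvw, hwz.le, hw'⟩
    obtain ⟨c, hc, hwc, hcz, hc'⟩ := hP.exists_accFromAbove_of_not hw hz hwz hw'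
    exact ⟨c, hc, hvw.trans hwc, hcz, hc'⟩
  · exact hP.exists_accFromAbove_of_not hv hz hvz hv'

end IsPerfectInterval

end PerfectInterval

section Split

variable {X : Type*} [LinearOrder X]

def OrderSeparated (A B : Set X) : Prop :=
  (∀ a ∈ A, ∀ b ∈ B, a < b) ∨ ∀ a ∈ A, ∀ b ∈ B, b < a

theorem OrderSeparated.symm {A B : Set X} (h : OrderSeparated A B) : OrderSeparated B A := by
  rcases h with h | h
  exacts [Or.inr fun a ha b hb => h b hb a ha, Or.inl fun a ha b hb => h b hb a ha]

theorem OrderSeparated.disjoint {A B : Set X} (h : OrderSeparated A B) : Disjoint A B :=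
  disjoint_left.2 fun x hA hB => by rcases h with h | h <;> exact lt_irrefl x (h x hA x hB)

theorem OrderSeparated.not_between {A B : Set X} (h : OrderSeparated A B) {a b c : X}
    (ha : a ∈ A) (hb : b ∈ B) (hc : c ∈ A) : ¬ (a < b ∧ b < c) := by
  rintro ⟨hab, hbc⟩
  rcases h with h | h
  exacts [(h c hc b hb).not_gt hbc, (h a ha b hb).not_gt hab]

structure IsSplit (P N F : Set X) : Prop where
  union_eq : N ∪ F = P
  left : IsPerfectInterval N
  right : IsPerfectInterval F
  separated : OrderSeparated N F

theorem IsPerfectInterval.exists_isSplit {P : Set X} (hP : IsPerfectInterval P) {v z : X}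
    (hv : v ∈ P) (hz : z ∈ P) (hvz : v ≠ z) : ∃ N F, IsSplit P N F ∧ v ∈ N ∧ z ∈ F := by
  have cut : ∀ {a b}, a ∈ P → b ∈ P → a < b → ∃ c, a < c ∧ c ≤ b ∧
      IsSplit P (P ∩ Iio c) (P ∩ Ici c) := fun ha hb hab => by
    obtain ⟨c, hc, hac, hcb, hc'⟩ := hP.exists_accFromAbove ha hb hab
    refine ⟨c, hac, hcb, ?_, hP.inter_Iio hc, hP.inter_Ici hc hc',
      Or.inl fun x hx y hy => hx.2.trans_le hy.2⟩
    rw [← inter_union_distrib_left, Iio_union_Ici, inter_univ]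
  rcases hvz.lt_or_gt with h | h
  · obtain ⟨c, hvc, hcz, hsplit⟩ := cut hv hz h
    exact ⟨_, _, hsplit, ⟨hv, hvc⟩, ⟨hz, hcz⟩⟩
  · obtain ⟨c, hzc, hcv, ⟨hunion, hL, hR, hsep⟩⟩ := cut hz hv h
    exact ⟨_, _, ⟨by rw [union_comm, hunion], hR, hL, hsep.symm⟩, ⟨hv, hcv⟩, ⟨hz, hzc⟩⟩

end Split

section Window

def window (k : ℕ) : Set ℤ := {p | -2 ^ k ≤ 2 * p ∧ 2 * p < 2 ^ k}

/-- `q` minus the multiple of `2 ^ k` nearest to it (halves rounded up), so that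
`-2 ^ k ≤ 2 * rep k q < 2 ^ k`. -/
def rep (k : ℕ) (q : ℤ) : ℤ := q - 2 ^ k * ((2 * q + 2 ^ k) / 2 ^ (k + 1))

variable {k : ℕ} {p p' q q' : ℤ}

theorem window_subset_succ (k : ℕ) : window k ⊆ window (k + 1) := fun p ⟨h₁, h₂⟩ => by
  have : (0 : ℤ) < 2 ^ k := by positivity
  constructor <;> rw [pow_succ] <;> linarith

theorem window_mono : Monotone window :=
  monotone_nat_of_le_succ window_subset_succ

theorem mem_window_natAbs_succ (p : ℤ) : p ∈ window (p.natAbs + 1) := by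
  have h : (p.natAbs : ℤ) < 2 ^ p.natAbs := by exact_mod_cast Nat.lt_two_pow_self
  rw [Int.natCast_natAbs] at h
  constructor <;> rw [pow_succ] <;> linarith [le_abs_self p, neg_abs_le p]

theorem rep_mem_window (k : ℕ) (q : ℤ) : rep k q ∈ window k := by
  have hk : (0 : ℤ) < 2 ^ k := by positivity
  have h := Int.emod_add_mul_ediv (2 * q + 2 ^ k) (2 ^ (k + 1))
  have h₀ := Int.emod_nonneg (2 * q + 2 ^ k) (b := 2 ^ (k + 1)) (by positivity)
  have h₁ := Int.emod_lt_of_pos (2 * q + 2 ^ k) (b := 2 ^ (k + 1)) (by positivity)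
  rw [pow_succ] at h h₀ h₁
  unfold rep
  rw [pow_succ]
  constructor <;> linarith

theorem rep_modEq (k : ℕ) (q : ℤ) : rep k q ≡ q [ZMOD 2 ^ k] :=
  Int.modEq_iff_dvd.2 ⟨(2 * q + 2 ^ k) / 2 ^ (k + 1), by unfold rep; ring⟩

theorem eq_of_mem_window (hp : p ∈ window k) (hp' : p' ∈ window k)
    (h : p ≡ p' [ZMOD 2 ^ k]) : p = p' := by
  have hlt : |p' - p| < 2 ^ k := by
    rw [abs_lt]; constructor <;> linarith [hp.1, hp.2, hp'.1, hp'.2]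
  linarith [Int.eq_zero_of_abs_lt_dvd (Int.modEq_iff_dvd.1 h) hlt]

theorem rep_eq_self (hp : p ∈ window k) : rep k p = p :=
  eq_of_mem_window (rep_mem_window k p) hp (rep_modEq k p)

theorem rep_congr (h : q ≡ q' [ZMOD 2 ^ k]) : rep k q = rep k q' :=
  eq_of_mem_window (rep_mem_window k q) (rep_mem_window k q')
    ((rep_modEq k q).trans (h.trans (rep_modEq k q').symm))

theorem modEq_two_pow_of_succ (h : q ≡ q' [ZMOD 2 ^ (k + 1)]) : q ≡ q' [ZMOD 2 ^ k] :=
  h.of_dvd (pow_dvd_pow 2 k.le_succ)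

theorem modEq_or_modEq_add_two_pow (h : q ≡ q' [ZMOD 2 ^ k]) :
    q ≡ q' [ZMOD 2 ^ (k + 1)] ∨ q ≡ q' + 2 ^ k [ZMOD 2 ^ (k + 1)] := by
  obtain ⟨t, ht⟩ := Int.modEq_iff_dvd.1 h
  rcases Int.even_or_odd t with ⟨s, hs⟩ | ⟨s, hs⟩
  · exact Or.inl (Int.modEq_iff_dvd.2 ⟨s, by linear_combination ht + 2 ^ k * hs⟩)
  · exact Or.inr (Int.modEq_iff_dvd.2 ⟨s + 1, by linear_combination ht + 2 ^ k * hs⟩)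

theorem not_add_two_pow_modEq (q : ℤ) : ¬ q + 2 ^ k ≡ q [ZMOD 2 ^ (k + 1)] := by
  intro h
  obtain ⟨t, ht⟩ := Int.modEq_iff_dvd.1 h
  have : (2 : ℤ) ^ k * (2 * t + 1) = 0 := by linear_combination -ht
  rcases mul_eq_zero.1 this with h | h
  · exact pow_ne_zero k two_ne_zero h
  · omega

theorem exists_modEq_two_pow {d : ℤ} (hd : d ≠ 0) : ∃ t : ℕ, d ≡ 2 ^ t [ZMOD 2 ^ (t + 1)] := by
  obtain ⟨u, hdu, hu⟩ :=
    (Int.finiteMultiplicity_iff (a := 2).2 ⟨by decide, hd⟩).exists_eq_pow_mul_and_not_dvd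
  generalize multiplicity 2 d = t at hdu
  obtain ⟨s, rfl⟩ : ∃ s, u = 2 * s + 1 := ⟨u / 2, by omega⟩
  exact ⟨t, Int.modEq_iff_dvd.2 ⟨-s, by rw [hdu]; ring⟩⟩

theorem modEq_rep_add_of_not_mem (hp : p ∈ window (k + 1)) (hpk : p ∉ window k) :
    p ≡ rep k p + 2 ^ k [ZMOD 2 ^ (k + 1)] := by
  refine (modEq_or_modEq_add_two_pow (rep_modEq k p).symm).resolve_left fun h => hpk ?_
  rw [eq_of_mem_window hp (window_subset_succ k (rep_mem_window k p)) h]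
  exact rep_mem_window k p

theorem eq_of_mem_window_succ (hp : p ∈ window (k + 1)) (hp' : p' ∈ window (k + 1))
    (h : p ≡ p' [ZMOD 2 ^ k]) (hw : p ∈ window k ↔ p' ∈ window k) : p = p' := by
  by_cases hpk : p ∈ window k
  · exact eq_of_mem_window hpk (hw.1 hpk) h
  refine eq_of_mem_window hp hp' ?_
  have h₁ := modEq_rep_add_of_not_mem hp hpk
  rw [rep_congr h] at h₁
  exact h₁.trans (modEq_rep_add_of_not_mem hp' (hw.not.1 hpk)).symm

theorem exists_mem_window_succ_rep_eq (r : ℤ) :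
    ∃ p ∈ window (k + 1), p ∉ window k ∧ rep k p = rep k r := by
  set p := rep (k + 1) (rep k r + 2 ^ k)
  have hp : p ≡ rep k r + 2 ^ k [ZMOD 2 ^ (k + 1)] := rep_modEq _ _
  have hrep : rep k p = rep k r := by
    rw [rep_congr ((modEq_two_pow_of_succ hp).trans Int.add_modEq_right),
      rep_eq_self (rep_mem_window k r)]
  refine ⟨p, rep_mem_window _ _, fun hpk => not_add_two_pow_modEq (k := k) p ?_, hrep⟩
  rw [← (rep_eq_self hpk).symm.trans hrep] at hp
  exact hp.symm

end Window

section SplitPiece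

variable {X : Type*}

open scoped Classical in
/-- The piece of class `q` modulo `2 ^ (k + 1)`, when the piece of class `q` modulo `2 ^ k` is
split into `N (rep k q)` and `F (rep k q)`: the class of `rep k q` (the one with
`rep (k + 1) q ∈ window k`) receives `N`, the other class `F`. -/
def splitPiece (k : ℕ) (N F : ℤ → Set X) (q : ℤ) : Set X :=
  if rep (k + 1) q ∈ window k then N (rep k q) else F (rep k q)

theorem splitPiece_congr {k : ℕ} {N F : ℤ → Set X} {q q' : ℤ} (h : q ≡ q' [ZMOD 2 ^ (k + 1)]) :
    splitPiece k N F q = splitPiece k N F q' := by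
  rw [splitPiece, splitPiece, rep_congr h, rep_congr (modEq_two_pow_of_succ h)]

variable [LinearOrder X] {k : ℕ} {P N F : ℤ → Set X}

theorem splitPiece_subset (hsplit : ∀ q, IsSplit (P q) (N q) (F q)) (q : ℤ) :
    splitPiece k N F q ⊆ P (rep k q) := by
  rw [splitPiece, ← (hsplit (rep k q)).union_eq]
  split_ifs
  exacts [subset_union_left, subset_union_right]

theorem splitPiece_separated (hsplit : ∀ q, IsSplit (P q) (N q) (F q)) (q : ℤ) :
    OrderSeparated (splitPiece k N F q) (splitPiece k N F (q + 2 ^ k)) := by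
  have hne : ¬ (rep (k + 1) q ∈ window k ↔ rep (k + 1) (q + 2 ^ k) ∈ window k) := by
    intro h
    have hmod : rep (k + 1) q ≡ rep (k + 1) (q + 2 ^ k) [ZMOD 2 ^ k] :=
      (modEq_two_pow_of_succ (rep_modEq (k + 1) q)).trans <| Int.add_modEq_right.symm.trans
        (modEq_two_pow_of_succ (rep_modEq (k + 1) (q + 2 ^ k))).symm
    have heq := eq_of_mem_window_succ (rep_mem_window _ _) (rep_mem_window _ _) hmod h
    apply not_add_two_pow_modEq (k := k) q
    calc q + 2 ^ k ≡ rep (k + 1) (q + 2 ^ k) [ZMOD 2 ^ (k + 1)] := (rep_modEq _ _).symm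
      _ = rep (k + 1) q := heq.symm
      _ ≡ q [ZMOD 2 ^ (k + 1)] := rep_modEq _ _
  rw [splitPiece, splitPiece, rep_congr (Int.add_modEq_right (a := q))]
  split_ifs with h₁ h₂ h₂
  · exact absurd (iff_of_true h₁ h₂) hne
  · exact (hsplit _).separated
  · exact (hsplit _).separated.symm
  · exact absurd (iff_of_false h₁ h₂) hne

theorem isPerfectInterval_splitPiece (hsplit : ∀ q, IsSplit (P q) (N q) (F q)) (q : ℤ) :
    IsPerfectInterval (splitPiece k N F q) := by
  rw [splitPiece]
  split_ifs
  exacts [(hsplit _).left, (hsplit _).right]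

end SplitPiece

section Stage

variable {X : Type*} [LinearOrder X]

/-- A partition of `X` into perfect intervals indexed by the residues modulo `2 ^ k`, together
with the values of the map under construction, fixed on `window k`. -/
structure Stage (X : Type*) [LinearOrder X] (k : ℕ) where
  piece : ℤ → Set X
  val : ℤ → X
  piece_congr {q q' : ℤ} : q ≡ q' [ZMOD 2 ^ k] → piece q = piece q'
  modEq_of_mem {q q' : ℤ} {x : X} : x ∈ piece q → x ∈ piece q' → q ≡ q' [ZMOD 2 ^ k]
  exists_mem (x : X) : ∃ q, x ∈ piece q
  isPerfectInterval (q : ℤ) : IsPerfectInterval (piece q)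
  val_mem {p : ℤ} : p ∈ window k → val p ∈ piece p

namespace Stage

variable {k : ℕ}

structure Refines (S : Stage X k) (S' : Stage X (k + 1)) : Prop where
  piece_subset (q : ℤ) : S'.piece q ⊆ S.piece q
  separated (q : ℤ) : OrderSeparated (S'.piece q) (S'.piece (q + 2 ^ k))
  val_eq {p : ℤ} : p ∈ window k → S'.val p = S.val p

def zero (hX : IsPerfectInterval (univ : Set X)) (x₀ : X) : Stage X 0 where
  piece _ := univ
  val _ := x₀
  piece_congr _ := rfl
  modEq_of_mem _ _ := by rw [pow_zero]; exact Int.modEq_one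
  exists_mem _ := ⟨0, mem_univ _⟩
  isPerfectInterval _ := hX
  val_mem _ := mem_univ _

theorem val_rep_mem (S : Stage X k) (q : ℤ) : S.val (rep k q) ∈ S.piece q :=
  S.piece_congr (rep_modEq k q) ▸ S.val_mem (rep_mem_window k q)

open scoped Classical in
noncomputable def next (S : Stage X k) (N F : ℤ → Set X) (z : ℤ → X)
    (hsplit : ∀ q, IsSplit (S.piece q) (N q) (F q)) (hN : ∀ q, S.val (rep k q) ∈ N q)
    (hz : ∀ q, z q ∈ F q) : Stage X (k + 1) where
  piece := splitPiece k N F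
  val p := if p ∈ window k then S.val p else z (rep k p)
  piece_congr := splitPiece_congr
  modEq_of_mem {q q' x} hx hx' := by
    have h := S.modEq_of_mem (S.piece_congr (rep_modEq k q) ▸ splitPiece_subset hsplit q hx)
      (S.piece_congr (rep_modEq k q') ▸ splitPiece_subset hsplit q' hx')
    refine (modEq_or_modEq_add_two_pow h).resolve_right fun h' => ?_
    rw [splitPiece_congr h'] at hx
    exact disjoint_left.1 (splitPiece_separated hsplit q').disjoint hx' hx
  exists_mem x := by
    obtain ⟨q, hq⟩ := S.exists_mem x
    rw [← S.piece_congr (rep_modEq k q), ← (hsplit _).union_eq] at hq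
    rcases hq with hN' | hF'
    · refine ⟨rep k q, ?_⟩
      have hr := rep_mem_window k q
      rwa [splitPiece, rep_eq_self (window_subset_succ k hr), if_pos hr, rep_eq_self hr]
    · obtain ⟨p, hp, hpk, hrep⟩ := exists_mem_window_succ_rep_eq (k := k) q
      refine ⟨p, ?_⟩
      rwa [splitPiece, rep_eq_self hp, if_neg hpk, hrep]
  isPerfectInterval := isPerfectInterval_splitPiece hsplit
  val_mem {p} hp := by
    simp only [splitPiece, rep_eq_self hp]
    split_ifs with hpk
    · simpa [rep_eq_self hpk] using hN p
    · exact hz _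

theorem refines_next (S : Stage X k) {N F : ℤ → Set X} {z : ℤ → X}
    (hsplit : ∀ q, IsSplit (S.piece q) (N q) (F q)) (hN : ∀ q, S.val (rep k q) ∈ N q)
    (hz : ∀ q, z q ∈ F q) : S.Refines (S.next N F z hsplit hN hz) where
  piece_subset q := S.piece_congr (rep_modEq k q) ▸ splitPiece_subset hsplit q
  separated := splitPiece_separated hsplit
  val_eq hp := if_pos hp

theorem exists_refines (S : Stage X k) (x : X) :
    ∃ S' : Stage X (k + 1), S.Refines S' ∧ x ∈ S'.val '' window (k + 1) := by
  have hz : ∀ q, ∃ z ∈ S.piece q, z ≠ S.val (rep k q) ∧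
      (x ∈ S.piece q → x ∉ S.val '' window k → z = x) := by
    intro q
    by_cases h : x ∈ S.piece q ∧ x ∉ S.val '' window k
    · exact ⟨x, h.1, fun hx => h.2 ⟨_, rep_mem_window k q, hx.symm⟩, fun _ _ => rfl⟩
    · obtain ⟨z, hz, hne⟩ := (S.isPerfectInterval q).exists_ne (S.val_rep_mem q)
      exact ⟨z, hz, hne, fun h₁ h₂ => (h ⟨h₁, h₂⟩).elim⟩
  choose z hzP hzne hzx using hz
  choose N F hsplit hN hF using fun q =>
    (S.isPerfectInterval q).exists_isSplit (S.val_rep_mem q) (hzP q) (hzne q).symm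
  refine ⟨S.next N F z hsplit hN hF, S.refines_next hsplit hN hF, ?_⟩
  by_cases hx : x ∈ S.val '' window k
  · obtain ⟨p, hp, rfl⟩ := hx
    exact ⟨p, window_subset_succ k hp, if_pos hp⟩
  · obtain ⟨q, hq⟩ := S.exists_mem x
    obtain ⟨p, hp, hpk, hrep⟩ := exists_mem_window_succ_rep_eq (k := k) q
    refine ⟨p, hp, (if_neg hpk).trans ?_⟩
    rw [hrep]
    exact hzx _ (S.piece_congr (rep_modEq k q) ▸ hq) hx

end Stage

theorem exists_stages (hX : IsPerfectInterval (univ : Set X)) (e : ℕ → X) :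
    ∃ S : (k : ℕ) → Stage X k,
      ∀ k, (S k).Refines (S (k + 1)) ∧ e k ∈ (S (k + 1)).val '' window (k + 1) := by
  choose next hnext using fun k (S : Stage X k) => S.exists_refines (e k)
  exact ⟨fun k => Nat.rec (motive := fun k => Stage X k) (Stage.zero hX (e 0)) next k,
    fun k => hnext k _⟩

end Stage

section Limit

variable {X : Type*} [LinearOrder X] (S : (k : ℕ) → Stage X k)

def limitMap (p : ℤ) : X := (S (p.natAbs + 1)).val p

variable {S}

theorem piece_subset_of_le (hS : ∀ k, (S k).Refines (S (k + 1))) {j k : ℕ} (hjk : j ≤ k)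
    (q : ℤ) : (S k).piece q ⊆ (S j).piece q := by
  induction k, hjk using Nat.le_induction with
  | base => exact subset_rfl
  | succ k _ ih => exact ((hS k).piece_subset q).trans ih

theorem val_eq_of_le (hS : ∀ k, (S k).Refines (S (k + 1))) {j k : ℕ} {p : ℤ}
    (hp : p ∈ window j) (hjk : j ≤ k) : (S k).val p = (S j).val p := by
  induction k, hjk using Nat.le_induction with
  | base => rfl
  | succ k hjk ih => rw [(hS k).val_eq (window_mono hjk hp), ih]

theorem limitMap_eq_val (hS : ∀ k, (S k).Refines (S (k + 1))) {k : ℕ} {p : ℤ}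
    (hp : p ∈ window k) : limitMap S p = (S k).val p := by
  rw [limitMap, ← val_eq_of_le hS (mem_window_natAbs_succ p) (le_max_right k _),
    val_eq_of_le hS hp (le_max_left _ _)]

theorem limitMap_mem_piece (hS : ∀ k, (S k).Refines (S (k + 1))) (k : ℕ) (p : ℤ) :
    limitMap S p ∈ (S k).piece p := by
  have hp : p ∈ window (max k (p.natAbs + 1)) :=
    window_mono (le_max_right _ _) (mem_window_natAbs_succ p)
  rw [limitMap_eq_val hS hp]
  exact piece_subset_of_le hS (le_max_left _ _) p ((S _).val_mem hp)

theorem injective_limitMap (hS : ∀ k, (S k).Refines (S (k + 1))) : Injective (limitMap S) := by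
  intro p p' h
  set k := (p' - p).natAbs
  have hmod := (S k).modEq_of_mem (limitMap_mem_piece hS k p) (h ▸ limitMap_mem_piece hS k p')
  have hlt : |p' - p| < 2 ^ k := by
    rw [← Int.natCast_natAbs]; exact_mod_cast Nat.lt_two_pow_self
  linarith [Int.eq_zero_of_abs_lt_dvd (Int.modEq_iff_dvd.1 hmod) hlt]

theorem chaotic_limitMap (hS : ∀ k, (S k).Refines (S (k + 1))) : Chaotic (limitMap S) := by
  rintro n d ⟨h₁, h₂⟩
  have hd : d ≠ 0 := by rintro rfl; simp at h₁
  obtain ⟨t, ht⟩ := exists_modEq_two_pow hd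
  obtain ⟨m, hm⟩ := Int.modEq_iff_dvd.1 ht
  have hc : n + d ≡ n - d [ZMOD 2 ^ (t + 1)] :=
    Int.modEq_iff_dvd.2 ⟨2 * m - 1, by linear_combination 2 * hm⟩
  have hb : n ≡ n - d + 2 ^ t [ZMOD 2 ^ (t + 1)] :=
    Int.modEq_iff_dvd.2 ⟨m, by linear_combination hm⟩
  refine ((hS t).separated (n - d)).not_between (limitMap_mem_piece hS _ _) ?_ ?_ ⟨h₁, h₂⟩
  · exact (S (t + 1)).piece_congr hb ▸ limitMap_mem_piece hS _ _
  · exact (S (t + 1)).piece_congr hc ▸ limitMap_mem_piece hS _ _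

end Limit

theorem exists_bijective_chaotic {X : Type*} [LinearOrder X] [Countable X] [Nonempty X]
    (hX : IsPerfectInterval (univ : Set X)) : ∃ f : ℤ → X, Bijective f ∧ Chaotic f := by
  obtain ⟨e, he⟩ := exists_surjective_nat X
  obtain ⟨S, hS⟩ := exists_stages hX e
  refine ⟨limitMap S, ⟨injective_limitMap fun k => (hS k).1, fun x => ?_⟩,
    chaotic_limitMap fun k => (hS k).1⟩
  obtain ⟨k, rfl⟩ := he x
  obtain ⟨p, hp, hpx⟩ := (hS k).2
  exact ⟨p, (limitMap_eq_val (fun k => (hS k).1) hp).trans hpx⟩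

/-- Let (X, ⪯) be a countably infinite totally ordered set. There exists a
chaotic bijection f : ℤ → X if and only if X has no isolated points. -/
theorem stmt_1 {X : Type*} [LinearOrder X] [TopologicalSpace X] [OrderTopology X]
    [Countable X] [Infinite X] :
    (∃ f : ℤ → X, Function.Bijective f ∧
        ¬ ∃ a b c : ℤ, f a < f b ∧ f b < f c ∧ (b : ℚ) - (a : ℚ) = (c : ℚ) - (b : ℚ)) ↔
      ∀ x : X, ¬ IsOpen ({x} : Set X) := by
  constructor
  · rintro ⟨f, hbij, hf⟩
    exact (chaotic_iff_not_exists.2 hf).not_isOpen_singleton hbij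
  · intro h
    obtain ⟨f, hbij, hf⟩ := exists_bijective_chaotic (isPerfectInterval_univ h)
    exact ⟨f, hbij, chaotic_iff_not_exists.1 hf⟩
end

section
/- Let S ⊆ ℚ be a set with the property that for every a ∈ S, the set {ord₂(b − a) : b ∈ S, b ≠ a} ⊆ ℤ is unbounded from above, and let (X, ⪯) be a totally ordered set. If there exists a binary bijection f : S → X, then X has no isolated points. -/
/-!
Let `f a` be an isolated point. If it has a point above it, it has an immediate successor `f c`.
Every `d` with `ord₂ (d - a) > ord₂ (c - a)` then satisfies `ord₂ (d - c) = ord₂ (c - a)`, so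
`f a < f c < f d` is forbidden and `f d ≤ f a`. In particular `f a` also has a point
below it, hence an immediate predecessor, and symmetrically all `f d` with `ord₂ (d - a)` large
lie above `f a`. Points `d ≠ a` with `ord₂ (d - a)` arbitrarily large exist by hypothesis, which
gives a contradiction.
-/

/-- The 2-adic order of a rational number, with `ord2 0 = ⊤`. -/
noncomputable def ord2 (q : ℚ) : WithTop ℤ :=
  if q = 0 then ⊤ else (padicValRat 2 q : WithTop ℤ)

open Function OrderDual Set Topology

lemma ord2_of_ne_zero {q : ℚ} (h : q ≠ 0) : ord2 q = (padicValRat 2 q : WithTop ℤ) := if_neg h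

lemma ord2_neg (q : ℚ) : ord2 (-q) = ord2 q := by
  simp only [ord2, neg_eq_zero, padicValRat.neg]

lemma ord2_sub_comm (a b : ℚ) : ord2 (a - b) = ord2 (b - a) := by
  rw [← neg_sub, ord2_neg]

lemma ord2_add_eq_of_lt {q r : ℚ} (h : ord2 q < ord2 r) : ord2 (q + r) = ord2 q := by
  rcases eq_or_ne r 0 with rfl | hr
  · rw [add_zero]
  have hq : q ≠ 0 := by
    rintro rfl
    simp [ord2] at h
  have hqr : q + r ≠ 0 := by
    intro hqr
    rw [eq_neg_of_add_eq_zero_right hqr, ord2_neg] at h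
    exact h.false
  rw [ord2_of_ne_zero hq, ord2_of_ne_zero hr, WithTop.coe_lt_coe] at h
  rw [ord2_of_ne_zero hqr, ord2_of_ne_zero hq, padicValRat.add_eq_of_lt hqr hq hr h]

lemma ord2_sub_eq_of_lt {a b c : ℚ} (h : ord2 (b - a) < ord2 (c - a)) :
    ord2 (c - b) = ord2 (b - a) := by
  rw [← ord2_sub_comm a b] at h ⊢
  rw [← ord2_add_eq_of_lt h, sub_add_sub_cancel']

structure IsBinary {X : Type*} [LT X] {S : Set ℚ} (f : S → X) : Prop where
  injective : Injective f
  forall_ord2_ne : ∀ a b c : S, f a < f b → f b < f c → ord2 (b - a) ≠ ord2 (c - b)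

namespace IsBinary

variable {X : Type*} [LinearOrder X] {S : Set ℚ} {f : S → X}

lemma dual (hf : IsBinary f) : IsBinary (toDual ∘ f) where
  injective := toDual.injective.comp hf.injective
  forall_ord2_ne a b c hab hbc h :=
    hf.forall_ord2_ne c b a hbc hab (by rw [ord2_sub_comm, ← h, ord2_sub_comm])

lemma exists_forall_le_of_covBy (hf : IsBinary f) {a c : S} (hac : f a ⋖ f c) :
    ∃ m : ℤ, ∀ d : S, (m : WithTop ℤ) < ord2 (d - a) → f d ≤ f a := by
  have hca : (c : ℚ) ≠ a := fun h => hac.lt.ne' (congrArg f (Subtype.ext h))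
  refine ⟨padicValRat 2 (c - a), fun d hd => le_of_not_gt fun had => ?_⟩
  rw [← ord2_of_ne_zero (sub_ne_zero.mpr hca)] at hd
  have hcd : f c < f d :=
    (hac.ge_of_gt had).lt_of_ne fun h => hd.ne (by rw [hf.injective h])
  exact hf.forall_ord2_ne a c d hac.lt hcd (ord2_sub_eq_of_lt hd).symm

lemma exists_forall_ge_of_covBy (hf : IsBinary f) {a c : S} (hca : f c ⋖ f a) :
    ∃ m : ℤ, ∀ d : S, (m : WithTop ℤ) < ord2 (d - a) → f a ≤ f d :=
  hf.dual.exists_forall_le_of_covBy (toDual_covBy_toDual_iff.mpr hca)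

end IsBinary

section OrderTopology

variable {X : Type*} [LinearOrder X] [TopologicalSpace X] [OrderTopology X]

lemma exists_covBy_of_isOpen_singleton {x : X} (hx : IsOpen {x}) (h : (Ioi x).Nonempty) :
    ∃ y, x ⋖ y := by
  have hbot : 𝓝[>] x = ⊥ :=
    Filter.inf_principal_eq_bot.mpr (Filter.mem_of_superset (hx.mem_nhds rfl) (by simp))
  obtain ⟨y, hxy⟩ := h
  exact (nhdsGT_eq_bot_iff.mp hbot).resolve_left fun htop => not_le.mpr hxy (htop y)

lemma exists_covBy_of_isOpen_singleton' {x : X} (hx : IsOpen {x}) (h : (Iio x).Nonempty) :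
    ∃ y, y ⋖ x := by
  obtain ⟨y, hy⟩ := exists_covBy_of_isOpen_singleton (X := Xᵒᵈ) hx h
  exact ⟨ofDual y, toDual_covBy_toDual_iff.mp hy⟩

lemma IsBinary.not_isOpen_singleton_of_lt {S : Set ℚ} {f : S → X} (hf : IsBinary f)
    (hsurj : Surjective f) {a : S}
    (hfar : ∀ m : ℤ, ∃ d : S, d ≠ a ∧ (m : WithTop ℤ) < ord2 (d - a)) {b : S} (hab : f a < f b) :
    ¬ IsOpen {f a} := by
  intro ha
  obtain ⟨y, hy⟩ := exists_covBy_of_isOpen_singleton ha ⟨f b, hab⟩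
  obtain ⟨c, rfl⟩ := hsurj y
  obtain ⟨m₁, below⟩ := hf.exists_forall_le_of_covBy hy
  obtain ⟨d, hda, hd⟩ := hfar m₁
  have hda' : f d < f a := (below d hd).lt_of_ne (hf.injective.ne hda)
  obtain ⟨z, hz⟩ := exists_covBy_of_isOpen_singleton' ha ⟨f d, hda'⟩
  obtain ⟨e, rfl⟩ := hsurj z
  obtain ⟨m₂, above⟩ := hf.exists_forall_ge_of_covBy hz
  obtain ⟨d', hd'a, hd'⟩ := hfar (max m₁ m₂)
  rw [WithTop.coe_max, max_lt_iff] at hd'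
  exact hd'a (hf.injective ((below d' hd'.1).antisymm (above d' hd'.2)))

end OrderTopology

lemma exists_ord2_sub_gt {S : Set ℚ}
    (hS : ∀ a ∈ S, ¬ BddAbove {n : ℤ | ∃ b ∈ S, b ≠ a ∧ ord2 (b - a) = (n : WithTop ℤ)})
    (a : S) (m : ℤ) : ∃ d : S, d ≠ a ∧ (m : WithTop ℤ) < ord2 (d - a) := by
  obtain ⟨n, ⟨b, hbS, hba, hord⟩, hmn⟩ := not_bddAbove_iff.mp (hS a a.2) m
  exact ⟨⟨b, hbS⟩, fun h => hba (congrArg Subtype.val h), by rw [hord]; exact_mod_cast hmn⟩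

/-- Let S ⊆ ℚ be a set such that for every a ∈ S the set
{ord₂(b − a) : b ∈ S, b ≠ a} ⊆ ℤ is unbounded from above, and let (X, ⪯) be a totally
ordered set. If there exists a binary bijection f : S → X, then X has no isolated points. -/
theorem stmt_3 {X : Type*} [LinearOrder X] [TopologicalSpace X] [OrderTopology X]
    (S : Set ℚ)
    (hS : ∀ a ∈ S, ¬ BddAbove {n : ℤ | ∃ b ∈ S, b ≠ a ∧ ord2 (b - a) = (n : WithTop ℤ)})
    (f : S → X) (hbij : Function.Bijective f)
    (hbin : ¬ ∃ a b c : S, f a < f b ∧ f b < f c ∧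
      ord2 ((b : ℚ) - (a : ℚ)) = ord2 ((c : ℚ) - (b : ℚ))) :
    ∀ x : X, ¬ IsOpen ({x} : Set X) := by
  intro x hx
  obtain ⟨a, rfl⟩ := hbij.surjective x
  have hf : IsBinary f :=
    ⟨hbij.injective, fun a b c hab hbc h => hbin ⟨a, b, c, hab, hbc, h⟩⟩
  have hfar := exists_ord2_sub_gt hS a
  obtain ⟨b, hba, -⟩ := hfar 0
  rcases (hf.injective.ne hba).lt_or_gt with hab | hab
  · exact hf.dual.not_isOpen_singleton_of_lt (toDual.surjective.comp hbij.surjective) hfar hab hx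
  · exact hf.not_isOpen_singleton_of_lt hbij.surjective hfar hab hx
end

section
/- Let S ⊆ ℚ, let (X, ⪯) be a totally ordered set, let f : S → X be chaotic, and let t be an odd positive integer. Suppose that a ∈ ℚ and d ∈ ℚ, d ≠ 0, are such that a + i·d ∈ S for all nonnegative integers i. Then f(a) ≺ f(a + d) if and only if f(a) ≺ f(a + t·d). -/
/-! Restricted to the progression `a, a + d, a + 2d, …`, a chaotic map becomes an injective
sequence `g` in which the middle term of every three-term progression of indices lies above both
ends or below both. Hence `g` alternates: `g n < g (n + 1)` exactly for even `n`. If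
`g 0 < g 1` but `g t < g 0` for an odd `t = 2m + 3`, induction applied to the reversed shift
`n ↦ g (t + n)` gives `g (2t - 2) < g t`; the progressions `(2, t, 2t - 2)` and `(0, t, 2t)` then
force `g 2 < g t < g 0` and `g t < g (2t)`, while alternation along the even indices (which starts
downwards since `g 2 < g 0`) gives `g (2t) < g (2t - 2)`, closing a cycle. -/

open OrderDual

structure IsChaoticSeq {X : Type*} [LinearOrder X] (g : ℕ → X) : Prop where
  injective : Function.Injective g
  not_lt_lt : ∀ ⦃i j k : ℕ⦄, i + k = 2 * j → g i < g j → ¬ g j < g k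

namespace IsChaoticSeq

variable {X : Type*} [LinearOrder X] {g : ℕ → X}

theorem dual (hg : IsChaoticSeq g) : IsChaoticSeq (fun n => toDual (g n)) where
  injective := toDual.injective.comp hg.injective
  not_lt_lt i j k h hij hjk := hg.not_lt_lt (k := i) (by omega) hjk hij

theorem comp_affine (hg : IsChaoticSeq g) (a : ℕ) {e : ℕ} (he : e ≠ 0) :
    IsChaoticSeq (fun n => g (a + e * n)) where
  injective i j h :=
    Nat.eq_of_mul_eq_mul_left (Nat.pos_of_ne_zero he) (by simpa using hg.injective h)
  not_lt_lt i j k h := hg.not_lt_lt (by grind)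

theorem lt_of_not_lt (hg : IsChaoticSeq g) {i j : ℕ} (hij : i ≠ j) (h : ¬ g i < g j) :
    g j < g i :=
  lt_of_le_of_ne (not_lt.mp h) (hg.injective.ne hij.symm)

theorem lt_iff_lt (hg : IsChaoticSeq g) {i j k : ℕ} (h : i + k = 2 * j) (hij : i ≠ j) :
    g i < g j ↔ g k < g j :=
  ⟨fun hlt => hg.lt_of_not_lt (by omega) (hg.not_lt_lt h hlt),
    fun hlt => hg.lt_of_not_lt hij.symm (hg.not_lt_lt (by omega) hlt)⟩

theorem gt_iff_gt (hg : IsChaoticSeq g) {i j k : ℕ} (h : i + k = 2 * j) (hij : i ≠ j) :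
    g j < g i ↔ g j < g k :=
  hg.dual.lt_iff_lt h hij

theorem lt_succ_iff_even (hg : IsChaoticSeq g) (h01 : g 0 < g 1) (n : ℕ) :
    g n < g (n + 1) ↔ Even n := by
  induction n with
  | zero => simpa using h01
  | succ n ih =>
    rw [Nat.even_add_one, ← ih, hg.lt_iff_lt (i := n) (k := n + 2) (by omega) (by omega)]
    exact ⟨lt_asymm, hg.lt_of_not_lt (by omega)⟩

theorem lt_of_lt_of_odd (hg : IsChaoticSeq g) (h01 : g 0 < g 1) (m : ℕ) :
    g 0 < g (2 * m + 1) := by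
  induction m generalizing X with
  | zero => simpa using h01
  | succ m ih =>
    set t := 2 * (m + 1) + 1 with ht
    by_contra hlt
    have ht0 : g t < g 0 := hg.lt_of_not_lt (by omega) hlt
    have hdown : g (t + 1) < g t :=
      hg.lt_of_not_lt (by omega) ((hg.lt_succ_iff_even h01 t).not.mpr (by simp [ht, parity_simps]))
    have hshift : g (t + (2 * m + 1)) < g t := by
      simpa using ih (hg.comp_affine t one_ne_zero).dual (by simpa using hdown)
    have h2t : g 2 < g t :=
      (hg.lt_iff_lt (i := t + (2 * m + 1)) (k := 2) (by omega) (by omega)).mp hshift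
    have htt : g t < g (2 * t) := (hg.gt_iff_gt (i := 0) (by omega) (by omega)).mp ht0
    have heven : g (2 * t) < g (t + (2 * m + 1)) := by
      have := ((hg.comp_affine 0 two_ne_zero).dual.lt_succ_iff_even
        (by simpa using h2t.trans ht0) (2 * m + 2)).mpr (by simp [parity_simps])
      rw [toDual_lt_toDual] at this
      convert this using 2 <;> omega
    exact lt_irrefl _ (heven.trans (hshift.trans htt))

theorem lt_one_iff_lt_of_odd (hg : IsChaoticSeq g) {t : ℕ} (ht : Odd t) :
    g 0 < g 1 ↔ g 0 < g t := by
  obtain ⟨m, rfl⟩ := ht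
  refine ⟨(hg.lt_of_lt_of_odd · m), fun h0t => ?_⟩
  by_contra h01
  exact (hg.dual.lt_of_lt_of_odd (hg.lt_of_not_lt zero_ne_one h01) m).not_gt h0t

theorem of_arithProg {S : Set ℚ} {f : S → X}
    (hinj : Function.Injective f)
    (hch : ¬ ∃ a b c : S, f a < f b ∧ f b < f c ∧ (b : ℚ) - (a : ℚ) = (c : ℚ) - (b : ℚ))
    {a d : ℚ} (hd : d ≠ 0) (hmem : ∀ i : ℕ, a + (i : ℚ) * d ∈ S) :
    IsChaoticSeq (fun i => f ⟨a + (i : ℚ) * d, hmem i⟩) where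
  injective i j h := by
    simpa [hd] using congrArg Subtype.val (hinj h)
  not_lt_lt i j k h hij hjk := by
    have hq : (i : ℚ) + k = 2 * j := by exact_mod_cast h
    exact hch ⟨_, _, _, hij, hjk, by simp only; linear_combination (-d) * hq⟩

end IsChaoticSeq

/-- Let S ⊆ ℚ, let (X, ⪯) be a totally ordered set, let f : S → X be chaotic,
and let t be an odd positive integer. Suppose a ∈ ℚ and d ∈ ℚ, d ≠ 0, are such that
a + i·d ∈ S for all nonnegative integers i. Then f(a) ≺ f(a + d) iff f(a) ≺ f(a + t·d). -/
theorem stmt_4 {X : Type*} [LinearOrder X] (S : Set ℚ) (f : S → X)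
    (hinj : Function.Injective f)
    (hch : ¬ ∃ a b c : S, f a < f b ∧ f b < f c ∧ (b : ℚ) - (a : ℚ) = (c : ℚ) - (b : ℚ))
    (t : ℕ) (ht : Odd t)
    (a d : ℚ) (hd : d ≠ 0) (hmem : ∀ i : ℕ, a + (i : ℚ) * d ∈ S) :
    f ⟨a, by simpa using hmem 0⟩ < f ⟨a + d, by simpa using hmem 1⟩ ↔
      f ⟨a, by simpa using hmem 0⟩ < f ⟨a + (t : ℚ) * d, hmem t⟩ := by
  have hg := IsChaoticSeq.of_arithProg hinj hch hd hmem
  convert hg.lt_one_iff_lt_of_odd ht using 3 <;> simp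
end

section
/- Let S ⊆ ℚ, let (X, ⪯) be a totally ordered set, let f : S → X be chaotic, let s be an even nonnegative integer, and let t be an odd positive integer. Suppose that a ∈ ℚ and d ∈ ℚ, d ≠ 0, are such that a + i·d ∈ S for all nonnegative integers i. Then f(a) ≺ f(a + d) if and only if f(a + s·d) ≺ f(a + t·d). -/
/-!
Pulling `f` back along `n ↦ a + n d` gives a chaotic sequence `G : ℕ → X`, so each `G j` lies
above both or below both of `G (j - r)` and `G (j + r)`. Hence consecutive values alternate, and
translates, step-`r` subsequences and order duals of `G` are again chaotic; this reduces the
claim to `G 0 < G 1 → G 0 < G n` for odd `n`. If `G n < G 0`, the midpoint property and the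
induction hypothesis (for `G` and for its translate `G (2n + ·)`) force the cycle
`G (3n) < G (2n) < G (3n - 2) < G (3n)`. Looking beyond `n` is unavoidable: on `{0, 1, 2, 3}`
the values `2, 3, 0, 1` contain no monotone progression, yet `G 3 < G 0`.
-/

open Function OrderDual

structure IsChaotic {X : Type*} [LinearOrder X] (G : ℕ → X) : Prop where
  injective : Injective G
  not_lt_lt {i j k : ℕ} : i + k = 2 * j → G i < G j → G j < G k → False

namespace IsChaotic

variable {X : Type*} [LinearOrder X] {G : ℕ → X}

theorem not_lt_iff (hG : IsChaotic G) {i j : ℕ} (hij : i ≠ j) : ¬ G i < G j ↔ G j < G i :=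
  not_lt.trans (hG.injective.ne hij).symm.le_iff_lt

theorem lt_iff_lt_of_add_eq (hG : IsChaotic G) {i j k : ℕ} (h : i + k = 2 * j) :
    G i < G j ↔ G k < G j := by
  have key : ∀ i k, i + k = 2 * j → G i < G j → G k < G j := by
    intro i k hik hi
    have hkj : k ≠ j := by
      rintro rfl
      obtain rfl : i = k := by omega
      exact lt_irrefl _ hi
    by_contra hk
    exact hG.not_lt_lt hik hi ((hG.not_lt_iff hkj).1 hk)
  exact ⟨key i k h, key k i (by omega)⟩

theorem comp_affine (hG : IsChaotic G) (u : ℕ) {r : ℕ} (hr : 0 < r) :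
    IsChaotic fun m => G (u + r * m) where
  injective _ _ h := Nat.eq_of_mul_eq_mul_left hr (Nat.add_left_cancel (hG.injective h))
  not_lt_lt {i j k} h := hG.not_lt_lt (i := u + r * i) (k := u + r * k) <| by
    calc u + r * i + (u + r * k) = 2 * u + r * (i + k) := by ring
      _ = 2 * (u + r * j) := by rw [h]; ring

theorem comp_add (hG : IsChaotic G) (u : ℕ) : IsChaotic fun m => G (u + m) := by
  simpa using hG.comp_affine u one_pos

theorem dual (hG : IsChaotic G) : IsChaotic (toDual ∘ G) where
  injective := toDual.injective.comp hG.injective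
  not_lt_lt {i j k} h hij hjk := hG.not_lt_lt (i := k) (k := i) (by omega) hjk hij

theorem lt_succ_iff_even (hG : IsChaotic G) (h01 : G 0 < G 1) (m : ℕ) :
    G m < G (m + 1) ↔ Even m := by
  induction m with
  | zero => simpa using h01
  | succ m ih =>
    rw [Nat.even_add_one, ← ih, ← hG.not_lt_iff (by omega : m + 2 ≠ m + 1),
      hG.lt_iff_lt_of_add_eq (by omega : m + (m + 2) = 2 * (m + 1))]

theorem lt_odd (hG : IsChaotic G) (h01 : G 0 < G 1) (k : ℕ) : G 0 < G (2 * k + 1) := by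
  induction k generalizing G with
  | zero => simpa using h01
  | succ k ih =>
    set n := 2 * (k + 1) + 1
    by_contra h0n
    have hn0 : G n < G 0 := (hG.not_lt_iff (by omega)).1 h0n
    have hn2 : G n < G (n - 2) := hn0.trans (ih hG h01)
    have h_up : G n < G (n + 2) := by
      rw [← hG.not_lt_iff (by omega), ← hG.lt_iff_lt_of_add_eq (i := n - 2) (by omega)]
      exact hn2.asymm
    have h_2n : G n < G (2 * n) := by
      rw [← hG.not_lt_iff (by omega), ← hG.lt_iff_lt_of_add_eq (i := 0) (by omega)]
      exact hn0.asymm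
    have h_3n : G (3 * n) < G (2 * n) :=
      (hG.lt_iff_lt_of_add_eq (by omega)).1 h_2n
    have h_step : G (3 * n - 2) < G (3 * n) := by
      have hstep := hG.comp_affine n two_pos
      have := (hstep.lt_succ_iff_even (by simpa using h_up) (2 * k + 2)).2 ⟨k + 1, by ring⟩
      convert this using 2 <;> omega
    have h_mid : G (2 * n) < G (3 * n - 2) := by
      have hshift := hG.comp_add (2 * n)
      have h01' := (hG.lt_succ_iff_even h01 (2 * n)).2 (by simp)
      convert ih hshift h01' using 2 <;> omega
    exact lt_irrefl _ (h_3n.trans (h_mid.trans h_step))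

theorem lt_of_even_of_odd (hG : IsChaotic G) (h01 : G 0 < G 1) {s t : ℕ} (hs : Even s)
    (ht : Odd t) : G s < G t := by
  obtain ⟨a, rfl⟩ := hs
  obtain ⟨b, rfl⟩ := ht
  rcases lt_or_gt_of_ne (by omega : a + a ≠ 2 * b + 1) with hst | hts
  · obtain ⟨k, hk⟩ : ∃ k, 2 * b + 1 = a + a + (2 * k + 1) := ⟨b - a, by omega⟩
    have h01' := (hG.lt_succ_iff_even h01 (a + a)).2 ⟨a, rfl⟩
    rw [hk]
    exact (hG.comp_add (a + a)).lt_odd h01' k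
  · obtain ⟨k, hk⟩ : ∃ k, a + a = 2 * b + 1 + (2 * k + 1) := ⟨a - b - 1, by omega⟩
    have h10 : G (2 * b + 1 + 1) < G (2 * b + 1) := by
      rw [← hG.not_lt_iff (by omega), hG.lt_succ_iff_even h01]
      simp
    rw [hk]
    exact (hG.comp_add (2 * b + 1)).dual.lt_odd h10 k

theorem lt_iff_of_even_of_odd (hG : IsChaotic G) {s t : ℕ} (hs : Even s) (ht : Odd t) :
    G 0 < G 1 ↔ G s < G t := by
  refine ⟨fun h01 => hG.lt_of_even_of_odd h01 hs ht, fun hst => ?_⟩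
  by_contra h01
  have h10 : G 1 < G 0 := (hG.not_lt_iff zero_ne_one).1 h01
  have hts : G t < G s := hG.dual.lt_of_even_of_odd h10 hs ht
  exact hst.asymm hts

end IsChaotic

theorem isChaotic_comp_arithmeticProgression {X : Type*} [LinearOrder X] {S : Set ℚ}
    {f : S → X} (hinj : Injective f)
    (hch : ¬ ∃ a b c : S, f a < f b ∧ f b < f c ∧ (b : ℚ) - (a : ℚ) = (c : ℚ) - (b : ℚ))
    {a d : ℚ} (hd : d ≠ 0) (hmem : ∀ i : ℕ, a + (i : ℚ) * d ∈ S) :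
    IsChaotic fun n : ℕ => f ⟨a + n * d, hmem n⟩ where
  injective i j h := by
    have hval : a + (i : ℚ) * d = a + j * d := congrArg Subtype.val (hinj h)
    exact_mod_cast mul_right_cancel₀ hd (add_left_cancel hval)
  not_lt_lt {i j k} h hij hjk := by
    have hq : (i : ℚ) + k = 2 * j := by exact_mod_cast h
    exact hch ⟨_, _, _, hij, hjk, by simp only; linear_combination (-d) * hq⟩

/-- Let S ⊆ ℚ, let (X, ⪯) be a totally ordered set, let f : S → X be chaotic,
let s be an even nonnegative integer, and let t be an odd positive integer. Suppose a ∈ ℚ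
and d ∈ ℚ, d ≠ 0, are such that a + i·d ∈ S for all nonnegative integers i. Then
f(a) ≺ f(a + d) iff f(a + s·d) ≺ f(a + t·d). -/
theorem stmt_5 {X : Type*} [LinearOrder X] (S : Set ℚ) (f : S → X)
    (hinj : Function.Injective f)
    (hch : ¬ ∃ a b c : S, f a < f b ∧ f b < f c ∧ (b : ℚ) - (a : ℚ) = (c : ℚ) - (b : ℚ))
    (s : ℕ) (hs : Even s) (t : ℕ) (ht : Odd t)
    (a d : ℚ) (hd : d ≠ 0) (hmem : ∀ i : ℕ, a + (i : ℚ) * d ∈ S) :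
    f ⟨a, by simpa using hmem 0⟩ < f ⟨a + d, by simpa using hmem 1⟩ ↔
      f ⟨a + (s : ℚ) * d, hmem s⟩ < f ⟨a + (t : ℚ) * d, hmem t⟩ := by
  have hG := isChaotic_comp_arithmeticProgression hinj hch hd hmem
  have h0 : f ⟨a, by simpa using hmem 0⟩ = f ⟨a + (0 : ℕ) * d, hmem 0⟩ := by
    congr 2; simp
  have h1 : f ⟨a + d, by simpa using hmem 1⟩ = f ⟨a + (1 : ℕ) * d, hmem 1⟩ := by
    congr 2; simp
  rw [h0, h1]
  exact hG.lt_iff_of_even_of_odd hs ht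
end

section
/- Let (X, ⪯) be a totally ordered set. Every chaotic map f : ℤ → X is binary. -/
structure IsChaotic_s7 {X : Type*} [LinearOrder X] (g : ℤ → X) : Prop where
  injective : Function.Injective g
  not_lt_lt : ∀ t e : ℤ, ¬ (g (t - e) < g t ∧ g t < g (t + e))

namespace IsChaotic_s7

variable {X : Type*} [LinearOrder X] {g : ℤ → X}

theorem comp_affine_s7 (hg : IsChaotic_s7 g) (a : ℤ) {k : ℤ} (hk : k ≠ 0) :
    IsChaotic_s7 fun t => g (a + k * t) where
  injective s t hst := mul_left_cancel₀ hk (add_left_cancel (hg.injective hst))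
  not_lt_lt t e := by
    simpa only [mul_sub, mul_add, ← add_sub_assoc, ← add_assoc] using
      hg.not_lt_lt (a + k * t) (k * e)

theorem comp_neg (hg : IsChaotic_s7 g) : IsChaotic_s7 fun t => g (-t) := by
  simpa using hg.comp_affine_s7 0 (k := -1) (by norm_num)

theorem not_lt_iff_s7 (hg : IsChaotic_s7 g) {s t : ℤ} (hst : s ≠ t) : ¬ g s < g t ↔ g t < g s := by
  rw [not_lt]
  exact (hg.injective.ne hst.symm).le_iff_lt

theorem sub_lt_iff_add_lt (hg : IsChaotic_s7 g) {e : ℤ} (he : e ≠ 0) (t : ℤ) :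
    g (t - e) < g t ↔ g (t + e) < g t := by
  suffices key : ∀ e ≠ 0, g (t - e) < g t → g (t + e) < g t by
    refine ⟨key e he, fun h => ?_⟩
    simpa [sub_eq_add_neg] using key (-e) (neg_ne_zero.mpr he) (by simpa [← sub_eq_add_neg] using h)
  intro e he h
  rw [← hg.not_lt_iff_s7 (by omega)]
  exact fun h' => hg.not_lt_lt t e ⟨h, h'⟩

theorem lt_add_iff_not_lt (hg : IsChaotic_s7 g) {e : ℤ} (he : e ≠ 0) (t : ℤ) :
    g t < g (t + e) ↔ ¬ g (t + e) < g (t + e + e) := by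
  rw [hg.not_lt_iff_s7 (by omega), ← hg.sub_lt_iff_add_lt he, add_sub_cancel_right]

theorem lt_add_iff_even (hg : IsChaotic_s7 g) {e : ℤ} (he : e ≠ 0) (t k : ℤ) :
    g (t + k * e) < g (t + k * e + e) ↔ (Even k ↔ g t < g (t + e)) := by
  induction k using Int.induction_on with
  | zero => simp
  | succ i ih =>
    have step := hg.lt_add_iff_not_lt he (t + i * e)
    rw [ih] at step
    rw [add_one_mul, ← add_assoc, Int.even_add_one]
    tauto
  | pred i ih =>
    have step := hg.lt_add_iff_not_lt he (t + (-i - 1) * e)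
    simp only [show t + (-i - 1) * e + e = t + -i * e by ring] at step ⊢
    rw [ih] at step
    rw [step, Int.even_sub_one]
    tauto

theorem forall_odd_or_forall_even_add_one_lt (hg : IsChaotic_s7 g) :
    (∀ w, Odd w → g (w + 1) < g w) ∨ ∀ w, Even w → g (w + 1) < g w := by
  have alt : ∀ w, g w < g (w + 1) ↔ (Even w ↔ g 0 < g 1) := by
    simpa using hg.lt_add_iff_even one_ne_zero 0
  by_cases h01 : g 0 < g 1
  · left
    intro w hw
    rw [← hg.not_lt_iff_s7 (by omega), alt]
    simpa [h01] using Int.not_even_iff_odd.mpr hw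
  · right
    intro w hw
    rw [← hg.not_lt_iff_s7 (by omega), alt]
    simpa [h01] using hw

theorem apply_add_lt_of_forall_abs_sub_lt (hg : IsChaotic_s7 g) {d : ℤ} (hd : Odd d) (hd1 : 1 < d)
    (closer : ∀ v u, Odd v → Even u → |u - v| < d → g u < g v) {v : ℤ} (hv : Odd v) :
    g (v + d) < g v := by
  rw [← hg.not_lt_iff_s7 (by omega)]
  intro hlt
  have below : ∀ s, 0 < s → s < d → g (v + d) < g (v + 2 * s) := fun s hs0 hsd =>
    closer _ _ (hv.add_even (even_two_mul s)) (hv.add_odd hd) (abs_lt.mpr ⟨by omega, by omega⟩)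
  have above : g (v + 2 * d) < g (v + d) := by
    have := (hg.sub_lt_iff_add_lt (e := d) (by omega) (v + d)).mp (by rwa [add_sub_cancel_right])
    rwa [add_assoc, ← two_mul] at this
  have alt := (hg.lt_add_iff_even two_ne_zero v (d - 1)).mpr
    (iff_of_true (hd.sub_odd odd_one) (hlt.trans (by simpa using below 1 one_pos hd1)))
  rw [show v + (d - 1) * 2 + 2 = v + 2 * d by ring, show v + (d - 1) * 2 = v + 2 * (d - 1) by ring]
    at alt
  exact lt_asymm (alt.trans above) (below (d - 1) (by omega) (by omega))

theorem lt_of_odd_of_even (hg : IsChaotic_s7 g) (hmax : ∀ w, Odd w → g (w + 1) < g w) {v u : ℤ}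
    (hv : Odd v) (hu : Even u) : g u < g v := by
  suffices key : ∀ n : ℕ, ∀ v u : ℤ, Odd v → Even u → |u - v| < n → g u < g v from
    key ((u - v).natAbs + 1) v u hv hu (by rw [Int.abs_eq_natAbs]; omega)
  intro n
  induction n with
  | zero => exact fun v u _ _ h => absurd h (by simp)
  | succ n ih =>
    intro v u hv hu hlt
    push_cast at hlt
    obtain hlt | hn := (Int.lt_add_one_iff.mp hlt).lt_or_eq
    · exact ih v u hv hu hlt
    have hodd : Odd (n : ℤ) := hn ▸ odd_abs.mpr (hu.sub_odd hv)
    obtain hn1 | hn1 : (n : ℤ) = 1 ∨ 1 < (n : ℤ) := by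
      obtain ⟨k, hk⟩ := hodd; omega
    · rw [hn1] at hn
      rcases (abs_eq zero_le_one).mp hn with h | h
      · simpa [show u = v + 1 by omega] using hmax v hv
      · rw [show u = v - 1 by omega, hg.sub_lt_iff_add_lt one_ne_zero]
        exact hmax v hv
    rcases (abs_eq (by omega)).mp hn with h | h
    · simpa [show u = v + n by omega] using hg.apply_add_lt_of_forall_abs_sub_lt hodd hn1 ih hv
    · have := hg.comp_neg.apply_add_lt_of_forall_abs_sub_lt hodd hn1
        (fun v' u' hv' hu' h' =>
          ih (-v') (-u') hv'.neg hu'.neg (by rwa [neg_sub_neg, abs_sub_comm]))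
        hv.neg
      rwa [neg_neg, show -(-v + (n : ℤ)) = u by omega] at this

theorem not_lt_lt_of_odd_sub (hg : IsChaotic_s7 g) {a b c : ℤ} (hab : Odd (b - a))
    (hbc : Odd (c - b)) : ¬ (g a < g b ∧ g b < g c) := by
  wlog hmax : ∀ w, Odd w → g (w + 1) < g w generalizing g a b c
  · have hmax' := hg.forall_odd_or_forall_even_add_one_lt.resolve_left hmax
    simpa using this (hg.comp_affine_s7 1 one_ne_zero) (a := a - 1) (b := b - 1) (c := c - 1)
      (by simpa using hab) (by simpa using hbc)
      (fun w hw => by simpa [add_comm, add_assoc] using hmax' (w + 1) hw.add_one)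
  rintro ⟨h1, h2⟩
  rcases Int.even_or_odd a with ha | ha
  · have hb : Odd b := by simpa using ha.add_odd hab
    exact lt_asymm h2 (hg.lt_of_odd_of_even hmax hb (by simpa using hb.add_odd hbc))
  · exact lt_asymm h1 (hg.lt_of_odd_of_even hmax ha (by simpa using ha.add_odd hab))

end IsChaotic_s7

theorem ord2_intCast {z : ℤ} (hz : z ≠ 0) : ord2 z = ((padicValInt 2 z : ℤ) : WithTop ℤ) := by
  simp [ord2, hz, padicValRat.of_int]

theorem exists_eq_two_pow_padicValInt_mul_odd {x : ℤ} (hx : x ≠ 0) :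
    ∃ y, Odd y ∧ x = 2 ^ padicValInt 2 x * y := by
  obtain ⟨y, hy⟩ := padicValInt_dvd (p := 2) x
  set m := padicValInt 2 x
  refine ⟨y, Int.not_even_iff_odd.mp fun ⟨k, hk⟩ => ?_, by exact_mod_cast hy⟩
  have hdvd : ((2 : ℕ) : ℤ) ^ (m + 1) ∣ x := ⟨k, by rw [hy, hk]; ring⟩
  rcases (padicValInt_dvd_iff _ x).mp hdvd with h | h
  · exact hx h
  · omega

/-- Let (X, ⪯) be a totally ordered set. Every chaotic map f : ℤ → X is
binary. -/
theorem stmt_7 {X : Type*} [LinearOrder X] (f : ℤ → X)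
    (hinj : Function.Injective f)
    (hch : ¬ ∃ a b c : ℤ, f a < f b ∧ f b < f c ∧ (b : ℚ) - (a : ℚ) = (c : ℚ) - (b : ℚ)) :
    Function.Injective f ∧
      ¬ ∃ a b c : ℤ, f a < f b ∧ f b < f c ∧
        ord2 ((b : ℚ) - (a : ℚ)) = ord2 ((c : ℚ) - (b : ℚ)) := by
  have hf : IsChaotic_s7 f := ⟨hinj, fun t e h => hch ⟨t - e, t, t + e, h.1, h.2, by push_cast; ring⟩⟩
  refine ⟨hinj, ?_⟩
  rintro ⟨a, b, c, hab, hbc, hord⟩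
  have hba : b - a ≠ 0 := sub_ne_zero.mpr fun h => hab.ne' (congrArg f h)
  have hcb : c - b ≠ 0 := sub_ne_zero.mpr fun h => hbc.ne' (congrArg f h)
  rw [← Int.cast_sub, ← Int.cast_sub, ord2_intCast hba, ord2_intCast hcb] at hord
  obtain ⟨x, hx, hxb⟩ := exists_eq_two_pow_padicValInt_mul_odd hba
  obtain ⟨y, hy, hyc⟩ := exists_eq_two_pow_padicValInt_mul_odd hcb
  rw [show padicValInt 2 (c - b) = padicValInt 2 (b - a) by exact_mod_cast hord.symm] at hyc
  set n := padicValInt 2 (b - a)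
  refine (hf.comp_affine_s7 a (pow_ne_zero n two_ne_zero)).not_lt_lt_of_odd_sub (a := 0) (b := x)
    (c := x + y) (by simpa using hx) (by simpa using hy) ?_
  simp only [mul_zero, add_zero, show a + 2 ^ n * x = b by linarith,
    show a + 2 ^ n * (x + y) = c by linarith]
  exact ⟨hab, hbc⟩
end

section
/- Let (X, ⪯) be a totally ordered set. Every chaotic map f : ℚ → X is binary. -/
open Function OrderDual

structure Chaotic_s8 {G X : Type*} [Sub G] [LinearOrder X] (f : G → X) : Prop where
  injective : Injective f
  sub_ne_sub : ∀ a b c, f a < f b → f b < f c → b - a ≠ c - b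

namespace Chaotic_s8

variable {X : Type*} [LinearOrder X]

section AddCommGroup

variable {G H : Type*} [AddCommGroup G] {f : G → X}

theorem dual (hf : Chaotic_s8 f) : Chaotic_s8 (toDual ∘ f) where
  injective := toDual.injective.comp hf.injective
  sub_ne_sub a b c hab hbc h := hf.sub_ne_sub c b a hbc hab <| by
    rw [sub_eq_sub_iff_add_eq_add] at h ⊢
    rw [h, add_comm]

theorem lt_of_lt_of_sub_eq_sub (hf : Chaotic_s8 f) {a b c : G} (hab : f a < f b)
    (h : b - a = c - b) : f c < f b := by
  refine (le_of_not_gt fun hbc => hf.sub_ne_sub a b c hab hbc h).lt_of_ne fun hcb => ?_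
  rw [hf.injective hcb, sub_self, sub_eq_zero] at h
  exact hab.ne' (congrArg f h)

theorem lt_of_gt_of_sub_eq_sub (hf : Chaotic_s8 f) {a b c : G} (hba : f b < f a)
    (h : b - a = c - b) : f b < f c :=
  hf.dual.lt_of_lt_of_sub_eq_sub hba h

theorem comp_add_hom [AddGroup H] (hf : Chaotic_s8 f) (b : G) {φ : H →+ G} (hφ : Injective φ) :
    Chaotic_s8 fun t => f (b + φ t) where
  injective := hf.injective.comp ((add_right_injective b).comp hφ)
  sub_ne_sub x y z hxy hyz h := hf.sub_ne_sub _ _ _ hxy hyz <| by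
    simp only [add_sub_add_left_eq_sub, ← map_sub, h]

end AddCommGroup

variable {g : ℤ → X}

theorem zero_lt_of_forall_abs_lt (hg : Chaotic_s8 g) {k : ℤ} (hk : Odd k) (h1k : 1 < k)
    (h : ∀ i, Odd i → |i| < k → g 0 < g i) : g 0 < g k := by
  by_contra! hk0
  have hk0 : g k < g 0 := hk0.lt_of_ne (hg.injective.ne (by omega))
  have hnk0 : g (-k) < g 0 := hg.lt_of_lt_of_sub_eq_sub hk0 (by ring)
  let S := (Finset.Ioo (-k) k).filter Odd
  have mem_S {i : ℤ} : i ∈ S ↔ Odd i ∧ |i| < k := by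
    rw [Finset.mem_filter, Finset.mem_Ioo, abs_lt, and_comm]
  obtain ⟨t, htS, htmin⟩ := S.exists_min_image g ⟨1, mem_S.2 ⟨odd_one, by simpa using h1k⟩⟩
  obtain ⟨ht, htk⟩ := mem_S.1 htS
  obtain ⟨c, hc, hco, hct⟩ : ∃ c, g c < g 0 ∧ Odd c ∧ |2 * t - c| < k := by
    rw [abs_lt] at htk
    rcases lt_or_gt_of_ne (show t ≠ 0 by rintro rfl; simp at ht) with htneg | htpos
    · exact ⟨-k, hnk0, hk.neg, by rw [abs_lt]; omega⟩
    · exact ⟨k, hk0, hk, by rw [abs_lt]; omega⟩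
  have hst : g (2 * t - c) < g t := hg.lt_of_lt_of_sub_eq_sub (hc.trans (h t ht htk)) (by ring)
  exact (htmin _ (mem_S.2 ⟨(even_two_mul t).sub_odd hco, hct⟩)).not_gt hst

theorem zero_lt_of_odd (hg : Chaotic_s8 g) (h1 : g 0 < g 1) {i : ℤ} (hi : Odd i) : g 0 < g i := by
  induction hn : i.natAbs using Nat.strong_induction_on generalizing i with
  | _ n ih =>
    suffices g 0 < g |i| by
      rcases abs_choice i with h | h
      · rwa [h] at this
      · rw [h] at this
        exact hg.lt_of_gt_of_sub_eq_sub this (by ring)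
    rcases (Int.one_le_abs (show i ≠ 0 by rintro rfl; simp at hi)).eq_or_lt with h | h
    · rwa [← h]
    · refine hg.zero_lt_of_forall_abs_lt (odd_abs.2 hi) h fun j hj hji => ih j.natAbs ?_ hj rfl
      rw [Int.abs_eq_natAbs, Int.abs_eq_natAbs] at hji
      omega

theorem lt_zero_iff_of_odd (hg : Chaotic_s8 g) {i : ℤ} (hi : Odd i) : g i < g 0 ↔ g 1 < g 0 := by
  rcases lt_or_gt_of_ne (hg.injective.ne one_ne_zero) with h1 | h1
  · exact iff_of_true (hg.dual.zero_lt_of_odd h1 hi) h1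
  · exact iff_of_false (hg.zero_lt_of_odd h1 hi).not_gt h1.not_gt

end Chaotic_s8

theorem Rat.not_dvd_num_den_of_padicValRat_eq_zero {p : ℕ} [hp : Fact p.Prime] {r : ℚ}
    (hr : r ≠ 0) (h : padicValRat p r = 0) : ¬ p ∣ r.num.natAbs ∧ ¬ p ∣ r.den := by
  rw [padicValRat_def, padicValInt, sub_eq_zero, Nat.cast_inj] at h
  have hnum_iff : p ∣ r.num.natAbs ↔ p ∣ r.den := by
    rw [dvd_iff_padicValNat_ne_zero (by simpa using hr), dvd_iff_padicValNat_ne_zero r.den_nz, h]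
  rw [hnum_iff, and_self]
  exact fun hden => hp.out.not_dvd_one (r.reduced ▸ Nat.dvd_gcd (hnum_iff.2 hden) hden)

theorem exists_odd_mul_of_padicValRat_two_eq {u v : ℚ} (hu : u ≠ 0) (hv : v ≠ 0)
    (h : padicValRat 2 u = padicValRat 2 v) :
    ∃ e : ℚ, e ≠ 0 ∧ ∃ j k : ℤ, Odd j ∧ Odd k ∧ u = j * e ∧ v = k * e := by
  obtain ⟨hnum, hden⟩ := Rat.not_dvd_num_den_of_padicValRat_eq_zero (p := 2)
    (div_ne_zero hu hv) (by rw [padicValRat.div hu hv, h, sub_self])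
  have hden0 : ((u / v).den : ℚ) ≠ 0 := by positivity
  refine ⟨v / (u / v).den, div_ne_zero hv hden0, (u / v).num, (u / v).den, ?_, ?_, ?_, ?_⟩
  · exact Int.natAbs_odd.1 (Nat.odd_iff.2 (Nat.two_dvd_ne_zero.1 hnum))
  · exact_mod_cast Nat.odd_iff.2 (Nat.two_dvd_ne_zero.1 hden)
  · rw [mul_div_assoc', mul_div_right_comm, Rat.num_div_den, div_mul_cancel₀ u hv]
  · exact_mod_cast (mul_div_cancel₀ v hden0).symm

/-- Let (X, ⪯) be a totally ordered set. Every chaotic map f : ℚ → X is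
binary. -/
theorem stmt_8 {X : Type*} [LinearOrder X] (f : ℚ → X)
    (hinj : Function.Injective f)
    (hch : ¬ ∃ a b c : ℚ, f a < f b ∧ f b < f c ∧ b - a = c - b) :
    Function.Injective f ∧
      ¬ ∃ a b c : ℚ, f a < f b ∧ f b < f c ∧ ord2 (b - a) = ord2 (c - b) := by
  have hf : Chaotic_s8 f := ⟨hinj, fun a b c hab hbc h => hch ⟨a, b, c, hab, hbc, h⟩⟩
  refine ⟨hinj, fun ⟨a, b, c, hab, hbc, hord⟩ => ?_⟩
  have hu : b - a ≠ 0 := sub_ne_zero.2 (hinj.ne_iff.1 hab.ne')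
  have hv : c - b ≠ 0 := sub_ne_zero.2 (hinj.ne_iff.1 hbc.ne')
  simp only [ord2, hu, hv, if_false, WithTop.coe_inj] at hord
  obtain ⟨e, he, j, k, hj, hk, hje, hke⟩ := exists_odd_mul_of_padicValRat_two_eq hu hv hord
  let φ : ℤ →+ ℚ := (AddMonoidHom.mulRight e).comp (Int.castAddHom ℚ)
  have hg := hf.comp_add_hom b (φ := φ) ((mul_left_injective₀ he).comp Int.cast_injective)
  have ha : f (b + φ (-j)) < f (b + φ 0) := by
    convert hab using 2 <;> simp [φ, ← hje]
  have hc : f (b + φ 0) < f (b + φ k) := by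
    convert hbc using 2 <;> simp [φ, ← hke]
  exact ((hg.lt_zero_iff_of_odd hk).2 ((hg.lt_zero_iff_of_odd hj.neg).1 ha)).not_gt hc
end

section
/- Let (X, ⪯) be a totally ordered set. If f : ℚ → X is a chaotic bijection, then either X does not have a maximum or X does not have a minimum. -/
/-! If `f a` is the minimum and `f c` the maximum of `X`, then `a ≠ c` by injectivity, and
`a, (a + c) / 2, c` is an arithmetic progression on which `f` is strictly increasing. -/

open Function

theorem ne_of_forall_le_of_forall_ge {α X : Type*} [Nontrivial α] [PartialOrder X] {f : α → X}
    (hf : Injective f) {a c : α} (ha : ∀ x, f a ≤ f x) (hc : ∀ x, f x ≤ f c) : a ≠ c := by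
  rintro rfl
  obtain ⟨x, y, hxy⟩ := exists_pair_ne α
  exact hxy (hf ((le_antisymm (hc x) (ha x)).trans (le_antisymm (hc y) (ha y)).symm))

theorem exists_strictMono_progression_of_forall_le_of_forall_ge {K X : Type*} [Field K]
    [CharZero K] [PartialOrder X] {f : K → X} (hf : Injective f) {a c : K}
    (ha : ∀ x, f a ≤ f x) (hc : ∀ x, f x ≤ f c) :
    ∃ a b c : K, f a < f b ∧ f b < f c ∧ b - a = c - b := by
  have hac : a ≠ c := ne_of_forall_le_of_forall_ge hf ha hc
  refine ⟨a, (a + c) / 2, c, (ha _).lt_of_ne (hf.ne ?_), (hc _).lt_of_ne (hf.ne ?_), by ring⟩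
  · intro h
    exact hac (by linear_combination 2 * h)
  · intro h
    exact hac (by linear_combination 2 * h)

/-- Let (X, ⪯) be a totally ordered set. If f : ℚ → X is a chaotic bijection,
then either X does not have a maximum or X does not have a minimum. -/
theorem stmt_9 {X : Type*} [LinearOrder X] (f : ℚ → X)
    (hbij : Function.Bijective f)
    (hch : ¬ ∃ a b c : ℚ, f a < f b ∧ f b < f c ∧ b - a = c - b) :
    (¬ ∃ m : X, ∀ x : X, x ≤ m) ∨ (¬ ∃ m : X, ∀ x : X, m ≤ x) := by
  by_contra! ⟨⟨M, hM⟩, m, hm⟩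
  obtain ⟨a, rfl⟩ := hbij.surjective m
  obtain ⟨c, rfl⟩ := hbij.surjective M
  exact hch (exists_strictMono_progression_of_forall_le_of_forall_ge hbij.injective
    (fun x ↦ hm (f x)) (fun x ↦ hM (f x)))
end

section
/- Let (X, ⪯) be a countably infinite totally ordered set without isolated points. Then there exists a binary bijection f : ℤ → X. -/
open Set

namespace BinaryBijection

theorem modEq_add_two_pow_or {k : ℕ} {a b : ℤ} (h : a ≡ b [ZMOD 2 ^ k]) :
    a ≡ b [ZMOD 2 ^ (k + 1)] ∨ a + 2 ^ k ≡ b [ZMOD 2 ^ (k + 1)] := by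
  obtain ⟨m, hm⟩ := (Int.modEq_iff_dvd.1 h)
  simp only [Int.modEq_iff_dvd, pow_succ]
  rcases Int.even_or_odd' m with ⟨j, rfl | rfl⟩
  · exact Or.inl ⟨j, by rw [hm]; ring⟩
  · exact Or.inr ⟨j, by linear_combination hm⟩

theorem not_add_two_pow_modEq (k : ℕ) (a : ℤ) : ¬ a + 2 ^ k ≡ a [ZMOD 2 ^ (k + 1)] := by
  rw [Int.modEq_iff_dvd, sub_add_cancel_left, dvd_neg, pow_succ]
  intro h
  have := Int.le_of_dvd (by positivity) h
  have : (0 : ℤ) < 2 ^ k := by positivity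
  linarith

/-- The balanced residues modulo `2 ^ k`; `rep k z` is the one congruent to `z`. -/
def window (k : ℕ) : Set ℤ := {z | -2 ^ k ≤ 2 * z ∧ 2 * z < 2 ^ k}

def rep (k : ℕ) (z : ℤ) : ℤ := Int.bmod z (2 ^ k)

theorem rep_modEq (k : ℕ) (z : ℤ) : rep k z ≡ z [ZMOD 2 ^ k] := by
  simpa [Int.ModEq, rep] using Int.bmod_emod (x := z) (m := 2 ^ k)

theorem rep_congr {k : ℕ} {z w : ℤ} (h : z ≡ w [ZMOD 2 ^ k]) : rep k z = rep k w := by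
  have h' : z % ((2 ^ k : ℕ) : ℤ) = w % ((2 ^ k : ℕ) : ℤ) := by push_cast; exact h
  simp only [rep, Int.bmod_def, h']

theorem rep_mem_window (k : ℕ) (z : ℤ) : rep k z ∈ window k := by
  have hpos : 0 < 2 ^ k := Nat.two_pow_pos k
  have h1 := Int.le_bmod (x := z) hpos
  have h2 := Int.bmod_lt (x := z) hpos
  simp only [window, rep, mem_ofPred_eq]
  push_cast at h1 h2 ⊢
  omega

theorem rep_eq_self {k : ℕ} {z : ℤ} (hz : z ∈ window k) : rep k z = z :=
  Int.bmod_eq_of_le_mul_two (by push_cast; linarith [hz.1]) (by push_cast; linarith [hz.2])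

theorem eq_of_modEq_of_mem_window {k : ℕ} {z w : ℤ} (hz : z ∈ window k) (hw : w ∈ window k)
    (h : z ≡ w [ZMOD 2 ^ k]) : z = w := by
  rw [← rep_eq_self hz, ← rep_eq_self hw, rep_congr h]

theorem window_mono : Monotone window := by
  refine monotone_nat_of_le_succ fun k z hz => ?_
  have : (0 : ℤ) < 2 ^ k := by positivity
  constructor <;> linarith [hz.1, hz.2, pow_succ (2 : ℤ) k]

theorem exists_mem_window (z : ℤ) : ∃ k, z ∈ window k := by
  have h : (z.natAbs : ℤ) < 2 ^ z.natAbs := by exact_mod_cast Nat.lt_two_pow_self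
  rw [Int.natCast_natAbs] at h
  refine ⟨z.natAbs + 1, ?_⟩
  rw [window, mem_ofPred_eq, pow_succ]
  constructor <;> linarith [neg_abs_le z, le_abs_self z]

theorem rep_rep (k : ℕ) (z : ℤ) : rep k (rep k z) = rep k z :=
  rep_eq_self (rep_mem_window k z)

theorem not_rep_modEq_of_not_mem_window {k : ℕ} {z : ℤ} (hz : z ∈ window (k + 1))
    (hzk : z ∉ window k) : ¬ rep k z ≡ z [ZMOD 2 ^ (k + 1)] := fun h => hzk <|
  eq_of_modEq_of_mem_window (window_mono k.le_succ (rep_mem_window k z)) hz h ▸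
    rep_mem_window k z

theorem exists_mem_window_succ_rep_eq {k : ℕ} {r : ℤ} (hr : r ∈ window k) :
    ∃ z ∈ window (k + 1), z ∉ window k ∧ rep k z = r := by
  set z := rep (k + 1) (r + 2 ^ k)
  have hz : z ≡ r + 2 ^ k [ZMOD 2 ^ (k + 1)] := rep_modEq _ _
  have hzr : z ≡ r [ZMOD 2 ^ k] :=
    (hz.of_dvd (pow_dvd_pow 2 k.le_succ)).trans Int.add_modEq_right
  refine ⟨z, rep_mem_window _ _, fun hzk => ?_, by rw [rep_congr hzr, rep_eq_self hr]⟩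
  rw [eq_of_modEq_of_mem_window hzk hr hzr] at hz
  exact not_add_two_pow_modEq k r hz.symm

theorem two_pow_succ_dvd_add_of_not_dvd {k : ℕ} {d e : ℤ} (hd : 2 ^ k ∣ d)
    (hd' : ¬ 2 ^ (k + 1) ∣ d) (he : 2 ^ k ∣ e) (he' : ¬ 2 ^ (k + 1) ∣ e) :
    2 ^ (k + 1) ∣ d + e := by
  obtain ⟨u, rfl⟩ := hd
  obtain ⟨v, rfl⟩ := he
  rw [pow_succ, mul_dvd_mul_iff_left (by positivity)] at hd' he'
  rw [← mul_add, pow_succ, mul_dvd_mul_iff_left (by positivity)]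
  omega

theorem not_two_pow_succ_padicValInt_dvd {d : ℤ} (hd : d ≠ 0) :
    ¬ (2 : ℤ) ^ (padicValInt 2 d + 1) ∣ d := by
  rw [show (2 : ℤ) = ((2 : ℕ) : ℤ) from rfl, padicValInt_dvd_iff]
  omega

theorem exists_modEq_of_ord2_eq {a b c : ℤ} (hab : a ≠ b) (hbc : b ≠ c)
    (h : ord2 ((b : ℚ) - a) = ord2 ((c : ℚ) - b)) :
    ∃ k, a ≡ b [ZMOD 2 ^ k] ∧ ¬ a ≡ b [ZMOD 2 ^ (k + 1)] ∧ a ≡ c [ZMOD 2 ^ (k + 1)] := by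
  have hd : b - a ≠ 0 := sub_ne_zero.2 hab.symm
  have he : c - b ≠ 0 := sub_ne_zero.2 hbc.symm
  have hv : padicValInt 2 (c - b) = padicValInt 2 (b - a) := by
    simp only [ord2, ← Int.cast_sub, Int.cast_eq_zero, hd, he, if_false,
      padicValRat.of_int] at h
    exact_mod_cast h.symm
  have hd' := not_two_pow_succ_padicValInt_dvd hd
  have he' := not_two_pow_succ_padicValInt_dvd he
  rw [hv] at he'
  simp only [Int.modEq_iff_dvd]
  refine ⟨_, padicValInt_dvd (b - a), hd', ?_⟩
  have := two_pow_succ_dvd_add_of_not_dvd (padicValInt_dvd (b - a)) hd'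
    (hv ▸ padicValInt_dvd (c - b)) he'
  rwa [sub_add_sub_cancel'] at this

variable {X : Type*} [LinearOrder X] {s t : Set X} {a b c p q y : X}

def IsLeftLimit (s : Set X) (x : X) : Prop :=
  (s ∩ Iio x).Nonempty ∧ ∀ a ∈ s, a < x → (s ∩ Ioo a x).Nonempty

def IsRightLimit (s : Set X) (x : X) : Prop :=
  (s ∩ Ioi x).Nonempty ∧ ∀ b ∈ s, x < b → (s ∩ Ioo x b).Nonempty

def IsPerfect (s : Set X) : Prop :=
  s.Nonempty ∧ ∀ x ∈ s, IsLeftLimit s x ∨ IsRightLimit s x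

theorem IsLeftLimit.inter (h : IsLeftLimit s y) (hc : c ∈ s) (hcy : c < y) (ht : Ioo c y ⊆ t) :
    IsLeftLimit (s ∩ t) y := by
  have key : ∀ a ∈ s, c ≤ a → a < y → (s ∩ t ∩ Ioo a y).Nonempty := fun a ha hca hay => by
    obtain ⟨b, hb, hab, hby⟩ := h.2 a ha hay
    exact ⟨b, ⟨hb, ht ⟨hca.trans_lt hab, hby⟩⟩, hab, hby⟩
  refine ⟨(key c hc le_rfl hcy).mono fun b hb => ⟨hb.1, hb.2.2⟩, fun a ha hay => ?_⟩
  rcases le_total c a with hca | hac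
  · exact key a ha.1 hca hay
  · exact (key c hc le_rfl hcy).mono fun b hb => ⟨hb.1, hac.trans_lt hb.2.1, hb.2.2⟩

theorem IsRightLimit.inter (h : IsRightLimit s y) (hc : c ∈ s) (hyc : y < c) (ht : Ioo y c ⊆ t) :
    IsRightLimit (s ∩ t) y := by
  have key : ∀ b ∈ s, b ≤ c → y < b → (s ∩ t ∩ Ioo y b).Nonempty := fun b hb hbc hyb => by
    obtain ⟨a, ha, hya, hab⟩ := h.2 b hb hyb
    exact ⟨a, ⟨ha, ht ⟨hya, hab.trans_le hbc⟩⟩, hya, hab⟩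
  refine ⟨(key c hc le_rfl hyc).mono fun b hb => ⟨hb.1, hb.2.1⟩, fun b hb hyb => ?_⟩
  rcases le_total b c with hbc | hcb
  · exact key b hb.1 hbc hyb
  · exact (key c hc le_rfl hyc).mono fun a ha => ⟨ha.1, ha.2.1, ha.2.2.trans_le hcb⟩

namespace IsPerfect

theorem nontrivial (hs : IsPerfect s) : s.Nontrivial := by
  obtain ⟨x, hx⟩ := hs.1
  rcases hs.2 x hx with ⟨⟨y, hy, hyx⟩, -⟩ | ⟨⟨y, hy, hxy⟩, -⟩
  · exact ⟨y, hy, x, hx, hyx.ne⟩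
  · exact ⟨x, hx, y, hy, hxy.ne⟩

theorem inter_Ioi (hs : IsPerfect s) (hc : c ∈ s) (hne : (s ∩ Ioi c).Nonempty) :
    IsPerfect (s ∩ Ioi c) := by
  refine ⟨hne, fun y ⟨hy, hcy⟩ => ?_⟩
  rcases hs.2 y hy with h | h
  · exact Or.inl (h.inter hc hcy Ioo_subset_Ioi_self)
  · obtain ⟨b, hb, hyb⟩ := h.1
    exact Or.inr (h.inter hb hyb fun z hz => lt_trans hcy hz.1)

theorem inter_Iio (hs : IsPerfect s) (hc : c ∈ s) (hne : (s ∩ Iio c).Nonempty) :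
    IsPerfect (s ∩ Iio c) := by
  refine ⟨hne, fun y ⟨hy, hyc⟩ => ?_⟩
  rcases hs.2 y hy with h | h
  · obtain ⟨a, ha, hay⟩ := h.1
    exact Or.inl (h.inter ha hay fun z hz => lt_trans hz.2 hyc)
  · exact Or.inr (h.inter hc hyc Ioo_subset_Iio_self)

theorem inter_Iic (hs : IsPerfect s) (hc : c ∈ s) (h : IsLeftLimit s c) :
    IsPerfect (s ∩ Iic c) := by
  refine ⟨⟨c, hc, le_rfl⟩, fun y ⟨hy, hyc⟩ => ?_⟩
  rcases hyc.lt_or_eq with hyc | rfl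
  · rcases hs.2 y hy with h' | h'
    · obtain ⟨a, ha, hay⟩ := h'.1
      exact Or.inl (h'.inter ha hay fun z hz => (hz.2.trans hyc).le)
    · exact Or.inr (h'.inter hc hyc fun z hz => hz.2.le)
  · obtain ⟨a, ha, hay⟩ := h.1
    exact Or.inl (h.inter ha hay fun z hz => hz.2.le)

theorem inter_Ici (hs : IsPerfect s) (hc : c ∈ s) (h : IsRightLimit s c) :
    IsPerfect (s ∩ Ici c) := by
  refine ⟨⟨c, hc, le_rfl⟩, fun y ⟨hy, hcy⟩ => ?_⟩
  rcases hcy.lt_or_eq with hcy | rfl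
  · rcases hs.2 y hy with h' | h'
    · exact Or.inl (h'.inter hc hcy fun z hz => hz.1.le)
    · obtain ⟨b, hb, hyb⟩ := h'.1
      exact Or.inr (h'.inter hb hyb fun z hz => (hcy.trans hz.1).le)
  · obtain ⟨b, hb, hyb⟩ := h.1
    exact Or.inr (h.inter hb hyb fun z hz => hz.1.le)

theorem exists_lowerCut (hs : IsPerfect s) (hp : p ∈ s) (hq : q ∈ s) (hpq : p < q) :
    ∃ A ⊆ s, p ∈ A ∧ q ∉ A ∧ IsPerfect A ∧ IsPerfect (s \ A) ∧ ∀ a ∈ A, ∀ b ∈ s \ A, a < b := by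
  obtain ⟨c, hc, ⟨hpc, hcq, hl⟩ | ⟨hpc, hcq, hr⟩⟩ : ∃ c ∈ s,
      (p ≤ c ∧ c < q ∧ IsLeftLimit s c) ∨ (p < c ∧ c ≤ q ∧ IsRightLimit s c) := by
    by_cases hbetween : ∃ r ∈ s, p < r ∧ r < q
    · obtain ⟨r, hr, hpr, hrq⟩ := hbetween
      exact ⟨r, hr, (hs.2 r hr).imp (fun h => ⟨hpr.le, hrq, h⟩) fun h => ⟨hpr, hrq.le, h⟩⟩
    · refine ⟨p, hp, Or.inl ⟨le_rfl, hpq, (hs.2 p hp).resolve_right fun h => hbetween ?_⟩⟩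
      obtain ⟨r, hr, hpr, hrq⟩ := h.2 q hq hpq
      exact ⟨r, hr, hpr, hrq⟩
  · have hR : s \ (s ∩ Iic c) = s ∩ Ioi c := by
      rw [sdiff_self_inter, sdiff_eq, compl_Iic]
    refine ⟨s ∩ Iic c, inter_subset_left, ⟨hp, hpc⟩, fun h => h.2.not_gt hcq,
      hs.inter_Iic hc hl, hR ▸ hs.inter_Ioi hc ⟨q, hq, hcq⟩, ?_⟩
    rw [hR]
    exact fun a ha b hb => ha.2.trans_lt hb.2
  · have hR : s \ (s ∩ Iio c) = s ∩ Ici c := by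
      rw [sdiff_self_inter, sdiff_eq, compl_Iio]
    refine ⟨s ∩ Iio c, inter_subset_left, ⟨hp, hpc⟩, fun h => h.2.not_ge hcq,
      hs.inter_Iio hc ⟨p, hp, hpc⟩, hR ▸ hs.inter_Ici hc hr, ?_⟩
    rw [hR]
    exact fun a ha b hb => ha.2.trans_le hb.2

end IsPerfect

def Separated (A B : Set X) : Prop :=
  (∀ a ∈ A, ∀ b ∈ B, a < b) ∨ ∀ a ∈ A, ∀ b ∈ B, b < a

theorem Separated.symm {A B : Set X} (h : Separated A B) : Separated B A :=
  (Or.symm h).imp (fun h b hb a ha => h a ha b hb) fun h b hb a ha => h a ha b hb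

theorem Separated.not_between {A B : Set X} {a' : X} (h : Separated A B) (ha : a ∈ A)
    (ha' : a' ∈ A) (hb : b ∈ B) : ¬ (a < b ∧ b < a') := fun ⟨hab, hba'⟩ =>
  h.elim (fun h => (h a' ha' b hb).not_gt hba') fun h => (h a ha b hb).not_gt hab

theorem IsPerfect.exists_split (hs : IsPerfect s) (hp : p ∈ s) (x₀ : X) :
    ∃ A ⊆ s, p ∈ A ∧ IsPerfect A ∧ IsPerfect (s \ A) ∧ Separated A (s \ A) ∧
      ∃ q ∈ s \ A, x₀ ∈ s → x₀ ≠ p → q = x₀ := by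
  obtain ⟨q, hq, hqp, hq₀⟩ : ∃ q ∈ s, q ≠ p ∧ (x₀ ∈ s → x₀ ≠ p → q = x₀) := by
    by_cases h : x₀ ∈ s ∧ x₀ ≠ p
    · exact ⟨x₀, h.1, h.2, fun _ _ => rfl⟩
    · obtain ⟨q, hq, hqp⟩ := hs.nontrivial.exists_ne p
      exact ⟨q, hq, hqp, fun h₁ h₂ => absurd ⟨h₁, h₂⟩ h⟩
  rcases hqp.lt_or_gt with hqp | hpq
  · obtain ⟨A, hAs, hqA, hpA, hA, hA', hsep⟩ := hs.exists_lowerCut hq hp hqp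
    have hA'' : s \ (s \ A) = A := sdiff_sdiff_cancel_left hAs
    refine ⟨s \ A, sdiff_subset, ⟨hp, hpA⟩, hA', hA''.symm ▸ hA, ?_, q, ?_, hq₀⟩
    · rw [hA'']
      exact Or.inr fun a ha b hb => hsep b hb a ha
    · rw [hA'']
      exact hqA
  · obtain ⟨A, hAs, hpA, hqA, hA, hA', hsep⟩ := hs.exists_lowerCut hp hq hpq
    exact ⟨A, hAs, hpA, hA, hA', Or.inl hsep, q, ⟨hq, hqA⟩, hq₀⟩

/-- Level `k` of the construction: `X` is partitioned into the perfect classes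
`{x | label x ≡ z [ZMOD 2 ^ k]}`, and for `z ∈ window k` the value `pt z` is already chosen in the
class of `z`. -/
structure Stage (X : Type*) [LinearOrder X] (k : ℕ) where
  label : X → ℤ
  pt : ℤ → X
  isPerfect_class : ∀ z, IsPerfect {x | label x ≡ z [ZMOD 2 ^ k]}
  label_pt : ∀ z ∈ window k, label (pt z) ≡ z [ZMOD 2 ^ k]

namespace Stage

variable {k : ℕ}

def cls (S : Stage X k) (z : ℤ) : Set X := {x | S.label x ≡ z [ZMOD 2 ^ k]}

theorem cls_rep (S : Stage X k) (z : ℤ) : S.cls (rep k z) = S.cls z := by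
  ext x
  exact ⟨fun h => h.trans (rep_modEq k z), fun h => h.trans (rep_modEq k z).symm⟩

theorem pt_rep_mem_cls (S : Stage X k) (z : ℤ) : S.pt (rep k z) ∈ S.cls z :=
  S.cls_rep z ▸ S.label_pt _ (rep_mem_window k z)

structure Refines (S : Stage X k) (T : Stage X (k + 1)) : Prop where
  label_modEq : ∀ x, T.label x ≡ S.label x [ZMOD 2 ^ k]
  pt_eq : ∀ z ∈ window k, T.pt z = S.pt z
  not_between : ∀ z, ∀ x ∈ T.cls z, ∀ x' ∈ T.cls z, ∀ y ∈ S.cls z \ T.cls z, ¬ (x < y ∧ y < x')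

open Classical in
/-- The labels of the refinement: the points of the class of `r = rep k (S.label x)` that lie in
`A r` keep the label `r`, the others get `r + 2 ^ k`. -/
noncomputable def relabel (S : Stage X k) (A : ℤ → Set X) (x : X) : ℤ :=
  rep k (S.label x) + if x ∈ A (rep k (S.label x)) then 0 else 2 ^ k

theorem relabel_modEq (S : Stage X k) (A : ℤ → Set X) (x : X) :
    S.relabel A x ≡ S.label x [ZMOD 2 ^ k] := by
  refine Int.ModEq.trans ?_ (rep_modEq k _)
  rw [relabel]
  split_ifs
  · rw [add_zero]
  · exact Int.add_modEq_right

theorem relabel_modEq_iff (S : Stage X k) (A : ℤ → Set X) (x : X) (z : ℤ) :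
    S.relabel A x ≡ z [ZMOD 2 ^ (k + 1)] ↔
      x ∈ S.cls z ∧ (x ∈ A (rep k z) ↔ rep k z ≡ z [ZMOD 2 ^ (k + 1)]) := by
  constructor
  · intro h
    have hxz : x ∈ S.cls z :=
      (S.relabel_modEq A x).symm.trans (h.of_dvd (pow_dvd_pow 2 k.le_succ))
    refine ⟨hxz, ?_⟩
    rw [relabel, rep_congr hxz] at h
    split_ifs at h with hxA
    · simpa [hxA] using h
    · exact iff_of_false hxA fun h' => not_add_two_pow_modEq k _ (h.trans h'.symm)
  · rintro ⟨hxz, hiff⟩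
    rw [relabel, rep_congr hxz]
    split_ifs with hxA
    · simpa using hiff.1 hxA
    · exact (modEq_add_two_pow_or (rep_modEq k z)).resolve_left (mt hiff.2 hxA)

theorem setOf_relabel_modEq (S : Stage X k) {A : ℤ → Set X} (hA : ∀ r, A r ⊆ S.cls r) (z : ℤ) :
    {x | S.relabel A x ≡ z [ZMOD 2 ^ (k + 1)]} =
      if rep k z ≡ z [ZMOD 2 ^ (k + 1)] then A (rep k z) else S.cls (rep k z) \ A (rep k z) := by
  ext x
  rw [mem_ofPred_eq, relabel_modEq_iff, ← S.cls_rep z]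
  split_ifs with h
  · exact ⟨fun hx => hx.2.2 h, fun hx => ⟨hA _ hx, iff_of_true hx h⟩⟩
  · simp [h]

theorem relabel_not_between (S : Stage X k) {A : ℤ → Set X}
    (hsep : ∀ r, Separated (A r) (S.cls r \ A r)) {x x' y : X} {z : ℤ}
    (hx : S.relabel A x ≡ z [ZMOD 2 ^ (k + 1)]) (hx' : S.relabel A x' ≡ z [ZMOD 2 ^ (k + 1)])
    (hy : y ∈ S.cls z) (hy' : ¬ S.relabel A y ≡ z [ZMOD 2 ^ (k + 1)]) : ¬ (x < y ∧ y < x') := by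
  rw [relabel_modEq_iff] at hx hx' hy'
  obtain ⟨hxS, hxA⟩ := hx
  obtain ⟨hx'S, hx'A⟩ := hx'
  have hyA : ¬ (y ∈ A (rep k z) ↔ rep k z ≡ z [ZMOD 2 ^ (k + 1)]) := fun h => hy' ⟨hy, h⟩
  rw [← S.cls_rep z] at hxS hx'S hy
  by_cases hxa : x ∈ A (rep k z)
  · exact (hsep _).not_between hxa (hx'A.2 (hxA.1 hxa))
      ⟨hy, fun h => hyA (iff_of_true h (hxA.1 hxa))⟩
  · exact (hsep _).symm.not_between ⟨hxS, hxa⟩ ⟨hx'S, fun h => hxa (hxA.2 (hx'A.1 h))⟩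
      (by_contra fun h => hyA (iff_of_false h (mt hxA.2 hxa)))

theorem exists_refines (S : Stage X k) (x₀ : X) :
    ∃ T : Stage X (k + 1), S.Refines T ∧ x₀ ∈ T.pt '' window (k + 1) := by
  classical
  choose A hAs hpA hA hA' hsep q hq hq₀ using fun r =>
    (S.isPerfect_class r).exists_split (S.pt_rep_mem_cls r) x₀
  obtain ⟨pt', hpt'⟩ : ∃ pt' : ℤ → X, ∀ z,
      pt' z = if z ∈ window k then S.pt z else q (rep k z) :=
    ⟨_, fun _ => rfl⟩
  have hlabel_pt : ∀ z ∈ window (k + 1), S.relabel A (pt' z) ≡ z [ZMOD 2 ^ (k + 1)] := by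
    intro z hz
    rw [relabel_modEq_iff, hpt']
    split_ifs with hzk
    · rw [rep_eq_self hzk]
      exact ⟨S.label_pt z hzk, iff_of_true (by simpa only [rep_eq_self hzk] using hpA z) rfl⟩
    · exact ⟨S.cls_rep z ▸ (hq _).1,
        iff_of_false (hq _).2 (not_rep_modEq_of_not_mem_window hz hzk)⟩
  let T : Stage X (k + 1) := ⟨S.relabel A, pt', fun z => by
    rw [S.setOf_relabel_modEq hAs]; split_ifs; exacts [hA _, hA' _], hlabel_pt⟩
  refine ⟨T, ⟨S.relabel_modEq A, fun z hz => by simp [T, hpt', hz],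
    fun z x hx x' hx' y hy => S.relabel_not_between hsep hx hx' hy.1 hy.2⟩, ?_⟩
  set r := rep k (S.label x₀)
  by_cases h : x₀ = S.pt r
  · refine ⟨r, window_mono k.le_succ (rep_mem_window _ _), ?_⟩
    change pt' r = x₀
    rw [hpt', if_pos (rep_mem_window _ _), h]
  · obtain ⟨z, hz, hzk, hzr⟩ := exists_mem_window_succ_rep_eq (rep_mem_window k (S.label x₀))
    refine ⟨z, hz, ?_⟩
    change pt' z = x₀
    rw [hpt', if_neg hzk, hzr]
    exact hq₀ r (rep_modEq k _).symm (by rwa [rep_rep])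

end Stage

section Limit

variable {St : ∀ k, Stage X k}

theorem pt_eq_of_le (hSt : ∀ k, (St k).Refines (St (k + 1))) {j k : ℕ} (hjk : j ≤ k) {z : ℤ}
    (hz : z ∈ window j) : (St k).pt z = (St j).pt z := by
  induction k, hjk using Nat.le_induction with
  | base => rfl
  | succ k hjk ih => rw [(hSt k).pt_eq z (window_mono hjk hz), ih]

theorem label_modEq_of_le (hSt : ∀ k, (St k).Refines (St (k + 1))) {j k : ℕ} (hjk : j ≤ k)
    (x : X) : (St k).label x ≡ (St j).label x [ZMOD 2 ^ j] := by
  induction k, hjk using Nat.le_induction with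
  | base => rfl
  | succ k hjk ih => exact (((hSt k).label_modEq x).of_dvd (pow_dvd_pow 2 hjk)).trans ih

noncomputable def limit (St : ∀ k, Stage X k) (z : ℤ) : X :=
  (St (exists_mem_window z).choose).pt z

theorem limit_eq (hSt : ∀ k, (St k).Refines (St (k + 1))) {k : ℕ} {z : ℤ} (hz : z ∈ window k) :
    limit St z = (St k).pt z := by
  have hz' := (exists_mem_window z).choose_spec
  rw [limit, ← pt_eq_of_le hSt (le_max_left _ k) hz', pt_eq_of_le hSt (le_max_right _ k) hz]

theorem label_limit (hSt : ∀ k, (St k).Refines (St (k + 1))) (k : ℕ) (z : ℤ) :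
    (St k).label (limit St z) ≡ z [ZMOD 2 ^ k] := by
  obtain ⟨j, hj⟩ := exists_mem_window z
  have hz := window_mono (le_max_right k j) hj
  rw [limit_eq hSt hz]
  exact (label_modEq_of_le hSt (le_max_left k j) _).symm.trans
    (((St _).label_pt z hz).of_dvd (pow_dvd_pow 2 (le_max_left k j)))

theorem limit_injective (hSt : ∀ k, (St k).Refines (St (k + 1))) :
    Function.Injective (limit St) := by
  intro z w h
  obtain ⟨i, hi⟩ := exists_mem_window z
  obtain ⟨j, hj⟩ := exists_mem_window w
  refine eq_of_modEq_of_mem_window (window_mono (le_max_left i j) hi)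
    (window_mono (le_max_right i j) hj) ?_
  exact (label_limit hSt _ z).symm.trans (h ▸ label_limit hSt _ w)

theorem limit_not_between (hSt : ∀ k, (St k).Refines (St (k + 1))) {k : ℕ} {a b c : ℤ}
    (hab : a ≡ b [ZMOD 2 ^ k]) (hab' : ¬ a ≡ b [ZMOD 2 ^ (k + 1)])
    (hac : a ≡ c [ZMOD 2 ^ (k + 1)]) : ¬ (limit St a < limit St b ∧ limit St b < limit St c) :=
  (hSt k).not_between a _ (label_limit hSt _ a) _ ((label_limit hSt _ c).trans hac.symm) _
    ⟨(label_limit hSt _ b).trans hab.symm, fun h => hab' (h.symm.trans (label_limit hSt _ b))⟩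

end Limit

noncomputable def tower (S₀ : Stage X 0) (e : ℕ → X) : ∀ k, Stage X k
  | 0 => S₀
  | k + 1 => ((tower S₀ e k).exists_refines (e k)).choose

theorem tower_refines (S₀ : Stage X 0) (e : ℕ → X) (k : ℕ) :
    (tower S₀ e k).Refines (tower S₀ e (k + 1)) :=
  ((tower S₀ e k).exists_refines (e k)).choose_spec.1

theorem mem_tower_pt_image (S₀ : Stage X 0) (e : ℕ → X) (k : ℕ) :
    e k ∈ (tower S₀ e (k + 1)).pt '' window (k + 1) :=
  ((tower S₀ e k).exists_refines (e k)).choose_spec.2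

def Stage.initial (h : IsPerfect (univ : Set X)) (x₀ : X) : Stage X 0 where
  label _ := 0
  pt _ := x₀
  isPerfect_class _ := by simpa [Int.modEq_one] using h
  label_pt _ _ := by simp [Int.modEq_one]

theorem exists_bijective_not_between [Countable X] [Nonempty X] (h : IsPerfect (univ : Set X)) :
    ∃ f : ℤ → X, Function.Bijective f ∧ ∀ k a b c, a ≡ b [ZMOD 2 ^ k] →
      ¬ a ≡ b [ZMOD 2 ^ (k + 1)] → a ≡ c [ZMOD 2 ^ (k + 1)] → ¬ (f a < f b ∧ f b < f c) := by
  obtain ⟨e, he⟩ := exists_surjective_nat X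
  set S₀ := Stage.initial h (e 0)
  refine ⟨limit (tower S₀ e), ⟨limit_injective (tower_refines S₀ e), fun x => ?_⟩,
    fun k a b c => limit_not_between (tower_refines S₀ e)⟩
  obtain ⟨k, rfl⟩ := he x
  obtain ⟨z, hz, hzx⟩ := mem_tower_pt_image S₀ e k
  exact ⟨z, (limit_eq (tower_refines S₀ e) hz).trans hzx⟩

theorem isPerfect_univ_of_not_isOpen_singleton [TopologicalSpace X] [OrderTopology X]
    [Nonempty X] (h : ∀ x : X, ¬ IsOpen ({x} : Set X)) : IsPerfect (univ : Set X) := by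
  refine ⟨univ_nonempty, fun x _ => ?_⟩
  by_contra hx
  refine h x ?_
  rw [isOpen_singleton_iff_punctured_nhds, ← nhdsLT_sup_nhdsGT, sup_eq_bot_iff,
    nhdsLT_eq_bot_iff, nhdsGT_eq_bot_iff]
  simp only [not_or, IsLeftLimit, IsRightLimit, univ_inter, mem_univ, true_implies, not_and,
    not_forall] at hx
  refine ⟨or_iff_not_imp_left.2 fun hbot => ?_, or_iff_not_imp_left.2 fun htop => ?_⟩
  · obtain ⟨a, hax, hI⟩ := hx.1 (by simpa [IsBot] using hbot)
    exact ⟨a, hax, fun c hac hcx => hI ⟨c, hac, hcx⟩⟩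
  · obtain ⟨b, hxb, hI⟩ := hx.2 (by simpa [IsTop] using htop)
    exact ⟨b, hxb, fun c hxc hcb => hI ⟨c, hxc, hcb⟩⟩

end BinaryBijection

/-- Let (X, ⪯) be a countably infinite totally ordered set without isolated
points. Then there exists a binary bijection f : ℤ → X. -/
theorem stmt_14 {X : Type*} [LinearOrder X] [TopologicalSpace X] [OrderTopology X]
    [Countable X] [Infinite X] (hiso : ∀ x : X, ¬ IsOpen ({x} : Set X)) :
    ∃ f : ℤ → X, Function.Bijective f ∧
      ¬ ∃ a b c : ℤ, f a < f b ∧ f b < f c ∧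
        ord2 ((b : ℚ) - (a : ℚ)) = ord2 ((c : ℚ) - (b : ℚ)) := by
  obtain ⟨f, hf, hsep⟩ := BinaryBijection.exists_bijective_not_between
    (BinaryBijection.isPerfect_univ_of_not_isOpen_singleton hiso)
  refine ⟨f, hf, fun ⟨a, b, c, hab, hbc, h⟩ => ?_⟩
  obtain ⟨k, h₁, h₂, h₃⟩ := BinaryBijection.exists_modEq_of_ord2_eq (ne_of_apply_ne f hab.ne)
    (ne_of_apply_ne f hbc.ne) h
  exact hsep k a b c h₁ h₂ h₃ ⟨hab, hbc⟩
end

section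
/- There exists a sequence q₀, q₁, … of elements of ℤ_{(2)} such that (1) ord₂(q_n) = n for all nonnegative integers n, and (2) for every q ∈ ℤ_{(2)} there exists a finite subset A of the nonnegative integers such that q = Σ_{n∈A} q_n. -/
/-!
Since the residue field of `ℤ_(2)` is `𝔽₂`, two elements of the same valuation `n` differ by an
element of valuation `> n`. So given finitely many elements `qₙ` of valuation exactly `n`,
greedily subtracting `q_{ord₂ x}` from `x` ends, after finitely many steps, at `0` or at a remainder
whose valuation is not yet used; in the latter case the remainder becomes a new `qₙ`. Running this
along an enumeration of `ℚ` gives an increasing chain of such finite families whose union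
(completed by `2ⁿ` at the unused indices) is the required sequence.
-/

open Finset

theorem padicValRat_two_sub_one_pos {w : ℚ} (hw0 : w ≠ 0) (hw : padicValRat 2 w = 0)
    (hw1 : w ≠ 1) : 0 < padicValRat 2 (w - 1) := by
  have hdvd_iff (a : ℤ) : (2 : ℤ) ∣ a ↔ a = 0 ∨ 1 ≤ padicValInt 2 a := by
    simpa using padicValInt_dvd_iff (p := 2) 1 a
  -- `w.num` and `w.den` are both odd, so `w - 1 = (w.num - w.den) / w.den` has even numerator.
  have hv : padicValInt 2 w.num = padicValNat 2 w.den := by rw [padicValRat_def] at hw; omega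
  have hden : ¬ 2 ∣ w.den := fun h => by
    have hnum : 2 ∣ w.num.natAbs := Int.natAbs_dvd_natAbs.2 <|
      (hdvd_iff _).2 (Or.inr (hv ▸ mod_cast one_le_padicValNat_of_dvd w.den_nz h))
    exact absurd ((w.reduced.coprime_dvd_left hnum).eq_one_of_dvd h) (by norm_num)
  have hnum : ¬ (2 : ℤ) ∣ w.num := by
    rw [hdvd_iff, hv, padicValNat.eq_zero_of_not_dvd hden]
    simp [Rat.num_ne_zero.2 hw0]
  have hne : w.num - w.den ≠ 0 := fun h => hw1 <| by
    rw [← w.num_div_den, sub_eq_zero.1 h]; simp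
  have hsub : w - 1 = ((w.num - w.den : ℤ) : ℚ) / ((w.den : ℤ) : ℚ) := by
    conv_lhs => rw [← w.num_div_den]
    push_cast
    field_simp
  rw [hsub, padicValRat.div (by exact_mod_cast hne) (by simp), padicValRat.of_int,
    padicValRat.of_int, padicValInt.eq_zero_of_not_dvd (z := w.den) (by exact_mod_cast hden)]
  have := ((hdvd_iff _).1 (by omega)).resolve_left hne
  omega

theorem padicValRat_two_lt_sub {x y : ℚ} (hx : x ≠ 0) (hy : y ≠ 0) (hxy : x ≠ y)
    (h : padicValRat 2 x = padicValRat 2 y) : padicValRat 2 x < padicValRat 2 (x - y) := by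
  have hxy' : x / y ≠ 1 := fun h => hxy ((div_eq_one_iff_eq hy).1 h)
  have hw := padicValRat_two_sub_one_pos (div_ne_zero hx hy)
    (by rw [padicValRat.div hx hy, h, sub_self]) hxy'
  rw [show x - y = y * (x / y - 1) by field_simp,
    padicValRat.mul hy (sub_ne_zero.2 hxy')]
  omega

theorem padicValRat_two_nonneg_of_ord2_nonneg {x : ℚ} (hx : 0 ≤ ord2 x) :
    0 ≤ padicValRat 2 x := by
  unfold ord2 at hx
  split_ifs at hx with hx0
  · simp [hx0]
  · exact_mod_cast hx

theorem exists_eq_add_sum_of_padicValRat_two (S : Finset ℕ) (g : ℕ → ℚ)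
    (hg : ∀ n ∈ S, g n ≠ 0 ∧ padicValRat 2 (g n) = n) {x : ℚ} (hx : 0 ≤ padicValRat 2 x) :
    ∃ A ⊆ S, ∃ r, x = r + ∑ n ∈ A, g n ∧
      (r = 0 ∨ padicValRat 2 x ≤ padicValRat 2 r ∧ (padicValRat 2 r).toNat ∉ S) := by
  induction S using Finset.strongInduction generalizing x with
  | H S ih =>
  rcases eq_or_ne x 0 with rfl | hx0
  · exact ⟨∅, empty_subset _, 0, by simp, Or.inl rfl⟩
  set n := (padicValRat 2 x).toNat
  have hxn : padicValRat 2 x = n := (Int.toNat_of_nonneg hx).symm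
  by_cases hnS : n ∉ S
  · exact ⟨∅, empty_subset _, x, by simp, Or.inr ⟨le_rfl, hnS⟩⟩
  rw [not_not] at hnS
  obtain ⟨hgn0, hgn⟩ := hg n hnS
  rcases eq_or_ne x (g n) with hxg | hxg
  · exact ⟨{n}, singleton_subset_iff.2 hnS, 0, by simp [hxg], Or.inl rfl⟩
  have hlt : padicValRat 2 x < padicValRat 2 (x - g n) :=
    padicValRat_two_lt_sub hx0 hgn0 hxg (by rw [hgn, hxn])
  obtain ⟨A, hA, r, hxr, hr⟩ := ih (S.erase n) (erase_ssubset hnS)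
    (fun m hm => hg m (mem_of_mem_erase hm)) (hx.trans hlt.le)
  refine ⟨insert n A, insert_subset hnS (hA.trans (erase_subset n S)), r, ?_, ?_⟩
  · rw [sum_insert fun h => by simpa using hA h]
    linear_combination hxr
  · refine hr.imp_right fun ⟨hle, hrS⟩ => ⟨(hlt.trans_le hle).le, fun hrS' => hrS ?_⟩
    exact mem_erase.2 ⟨by omega, hrS'⟩

structure TwoAdicPartialBasis where
  support : Finset ℕ
  elem : ℕ → ℚ
  elem_spec : ∀ n ∈ support, elem n ≠ 0 ∧ padicValRat 2 (elem n) = n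

namespace TwoAdicPartialBasis

instance : Preorder TwoAdicPartialBasis where
  le B B' := B.support ⊆ B'.support ∧ ∀ n ∈ B.support, B'.elem n = B.elem n
  le_refl B := ⟨subset_rfl, fun _ _ => rfl⟩
  le_trans B₁ B₂ B₃ h₁₂ h₂₃ :=
    ⟨h₁₂.1.trans h₂₃.1, fun n hn => (h₂₃.2 n (h₁₂.1 hn)).trans (h₁₂.2 n hn)⟩

def empty : TwoAdicPartialBasis := ⟨∅, fun _ => 0, by simp⟩

theorem exists_le_eq_sum (B : TwoAdicPartialBasis) {x : ℚ} (hx : 0 ≤ padicValRat 2 x) :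
    ∃ B' ≥ B, ∃ A ⊆ B'.support, x = ∑ n ∈ A, B'.elem n := by
  obtain ⟨A, hA, r, hxr, hr⟩ := exists_eq_add_sum_of_padicValRat_two _ _ B.elem_spec hx
  rcases eq_or_ne r 0 with rfl | hr0
  · exact ⟨B, le_rfl, A, hA, by simpa using hxr⟩
  obtain ⟨hxr', hrS⟩ := hr.resolve_left hr0
  set m := (padicValRat 2 r).toNat
  have hrm : padicValRat 2 r = m := (Int.toNat_of_nonneg (hx.trans hxr')).symm
  have hupdate : ∀ n ∈ B.support, Function.update B.elem m r n = B.elem n :=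
    fun n hn => Function.update_of_ne (ne_of_mem_of_not_mem hn hrS) _ _
  refine ⟨⟨insert m B.support, Function.update B.elem m r, ?_⟩, ⟨subset_insert _ _, hupdate⟩,
    insert m A, insert_subset_insert m hA, ?_⟩
  · rw [forall_mem_insert, Function.update_self]
    exact ⟨⟨hr0, hrm⟩, fun n hn => hupdate n hn ▸ B.elem_spec n hn⟩
  · dsimp only
    rw [sum_insert fun h => hrS (hA h), Function.update_self,
      sum_congr rfl fun n hn => hupdate n (hA hn), hxr]

noncomputable def extend (B : TwoAdicPartialBasis) (x : ℚ) : TwoAdicPartialBasis :=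
  if hx : 0 ≤ padicValRat 2 x then (B.exists_le_eq_sum hx).choose else B

theorem le_extend (B : TwoAdicPartialBasis) (x : ℚ) : B ≤ B.extend x := by
  unfold extend
  split_ifs with hx
  exacts [(B.exists_le_eq_sum hx).choose_spec.1, le_rfl]

theorem exists_eq_sum_extend (B : TwoAdicPartialBasis) {x : ℚ} (hx : 0 ≤ padicValRat 2 x) :
    ∃ A ⊆ (B.extend x).support, x = ∑ n ∈ A, (B.extend x).elem n := by
  rw [extend, dif_pos hx]
  exact (B.exists_le_eq_sum hx).choose_spec.2

noncomputable def extendAlong (e : ℕ → ℚ) : ℕ → TwoAdicPartialBasis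
  | 0 => empty
  | k + 1 => (extendAlong e k).extend (e k)

theorem monotone_extendAlong (e : ℕ → ℚ) : Monotone (extendAlong e) :=
  monotone_nat_of_le_succ fun k => le_extend _ (e k)

open Classical in
noncomputable def limit (C : ℕ → TwoAdicPartialBasis) (n : ℕ) : ℚ :=
  if h : ∃ k, n ∈ (C k).support then (C (Nat.find h)).elem n else 2 ^ n

theorem limit_eq {C : ℕ → TwoAdicPartialBasis} (hC : Monotone C) {n k : ℕ}
    (hn : n ∈ (C k).support) : limit C n = (C k).elem n := by
  have h : ∃ k, n ∈ (C k).support := ⟨k, hn⟩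
  classical
  rw [limit, dif_pos h]
  exact ((hC (Nat.find_min' h hn)).2 n (Nat.find_spec h)).symm

theorem ord2_limit (C : ℕ → TwoAdicPartialBasis) (n : ℕ) : ord2 (limit C n) = (n : ℤ) := by
  have hspec : limit C n ≠ 0 ∧ padicValRat 2 (limit C n) = n := by
    classical
    unfold limit
    split_ifs with h
    · exact (C _).elem_spec n (Nat.find_spec h)
    · have h2 : padicValRat 2 2 = 1 := by exact_mod_cast padicValRat.self (p := 2) one_lt_two
      simp [h2]
  rw [ord2, if_neg hspec.1, hspec.2]

end TwoAdicPartialBasis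

open TwoAdicPartialBasis in
/-- There exists a sequence q₀, q₁, … of elements of ℤ_{(2)} such that
(1) ord₂(qₙ) = n for all n, and (2) every q ∈ ℤ_{(2)} is a finite sum Σ_{n∈A} qₙ. -/
theorem stmt_16 :
    ∃ q : ℕ → ℚ,
      (∀ n : ℕ, (0 : WithTop ℤ) ≤ ord2 (q n)) ∧
      (∀ n : ℕ, ord2 (q n) = ((n : ℤ) : WithTop ℤ)) ∧
      (∀ x : ℚ, (0 : WithTop ℤ) ≤ ord2 x → ∃ A : Finset ℕ, x = ∑ n ∈ A, q n) := by
  obtain ⟨e, he⟩ := exists_surjective_nat ℚ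
  refine ⟨limit (extendAlong e), fun n => ?_, ord2_limit _, fun x hx => ?_⟩
  · rw [ord2_limit]
    exact_mod_cast n.cast_nonneg
  · obtain ⟨k, rfl⟩ := he x
    obtain ⟨A, hA, hsum⟩ :=
      (extendAlong e k).exists_eq_sum_extend (padicValRat_two_nonneg_of_ord2_nonneg hx)
    exact ⟨A, hsum.trans (sum_congr rfl fun n hn =>
      (limit_eq (monotone_extendAlong e) (k := k + 1) (hA hn)).symm)⟩
end

section
/- Let (X, ⪯) be a totally ordered set without a maximum. Let S ⊆ ℚ be finite and let r ∈ ℚ, r ≠ 0, be such that ord₂(a − b) > ord₂(r) for all a, b ∈ S. If f : S → X is binary, then there exists a binary map g : S ∪ (S + r) → X whose restriction to S equals f. -/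
lemma ord2_eq_addValuation (q : ℚ) : ord2 q = Padic.addValuation (q : ℚ_[2]) := by
  by_cases hq : q = 0
  · simp [ord2, hq]
  · rw [ord2, if_neg hq, Padic.addValuation.apply (by exact_mod_cast hq), Padic.valuation_ratCast]

lemma ord2_add_eq_left {x y : ℚ} (h : ord2 x < ord2 y) : ord2 (x + y) = ord2 x := by
  simp only [ord2_eq_addValuation, Rat.cast_add] at h ⊢
  exact AddValuation.map_add_eq_of_lt_left _ h

lemma ord2_sub_eq_of_sub_mem {S : Set ℚ} {r x a : ℚ}
    (hord : ∀ a ∈ S, ∀ b ∈ S, ord2 r < ord2 (a - b)) (hx : x - r ∈ S) (ha : a ∈ S) :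
    ord2 (x - a) = ord2 r := by
  rw [show x - a = r + (x - r - a) by ring, ord2_add_eq_left (hord _ hx _ ha)]

lemma Finset.strictMonoOn_card_filter_lt {X : Type*} [LinearOrder X] (t : Finset X) :
    StrictMonoOn (fun x => (t.filter (· < x)).card) t := by
  intro x hx y _ hxy
  refine Finset.card_lt_card ⟨fun z hz => ?_, fun hsub => ?_⟩
  · rw [Finset.mem_filter] at hz ⊢
    exact ⟨hz.1, hz.2.trans hxy⟩
  · simpa using hsub (Finset.mem_filter.2 ⟨hx, hxy⟩)

section
variable {X : Type*}

def IsBinary_s18 [LinearOrder X] {S : Set ℚ} (f : S → X) : Prop :=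
  Function.Injective f ∧
    ¬ ∃ a b c : S, f a < f b ∧ f b < f c ∧ ord2 ((b : ℚ) - a) = ord2 ((c : ℚ) - b)

/-- `φ` sends the `k`-th point of `A` to the `k`-th term of an increasing sequence above `max A`. -/
lemma Set.Finite.exists_strictMonoOn_above [LinearOrder X] [NoMaxOrder X] {A : Set X}
    (hA : A.Finite) :
    ∃ φ : X → X, StrictMonoOn φ A ∧ ∀ a ∈ A, ∀ x, a < φ x := by
  rcases A.eq_empty_or_nonempty with rfl | hne
  · exact ⟨id, strictMonoOn_id, by simp⟩
  obtain ⟨c, hc⟩ := exists_gt (hA.toFinset.max' (by simpa using hne))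
  obtain ⟨u, hu, hu0⟩ := Nat.exists_strictMono' c
  refine ⟨fun x => u (hA.toFinset.filter (· < x)).card, ?_, fun a ha x => ?_⟩
  · exact hu.comp_strictMonoOn (by simpa using hA.toFinset.strictMonoOn_card_filter_lt)
  · calc a ≤ hA.toFinset.max' _ := hA.toFinset.le_max' a (by simpa using ha)
      _ < u 0 := hu0 ▸ hc
      _ ≤ _ := hu.monotone (Nat.zero_le _)

section ShiftExtend
variable {S : Set ℚ} {r : ℚ}

lemma sub_mem_of_mem_union_image_add {x : ℚ} (hx : x ∈ S ∪ (fun y => y + r) '' S) (h : x ∉ S) :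
    x - r ∈ S := by
  obtain ⟨y, hy, rfl⟩ := hx.resolve_left h
  simpa using hy

open Classical in
noncomputable def shiftExtend (f : S → X) (φ : X → X) (x : ↥(S ∪ (fun y => y + r) '' S)) : X :=
  if h : x.1 ∈ S then f ⟨x, h⟩ else φ (f ⟨x - r, sub_mem_of_mem_union_image_add x.2 h⟩)

variable (f : S → X) (φ : X → X)

lemma shiftExtend_of_mem {x : ↥(S ∪ (fun y => y + r) '' S)} (h : x.1 ∈ S) :
    shiftExtend f φ x = f ⟨x, h⟩ :=
  dif_pos h

lemma shiftExtend_of_notMem {x : ↥(S ∪ (fun y => y + r) '' S)} (h : x.1 ∉ S) :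
    shiftExtend f φ x = φ (f ⟨x - r, sub_mem_of_mem_union_image_add x.2 h⟩) :=
  dif_neg h

variable [LinearOrder X] {f φ}

lemma shiftExtend_lt_shiftExtend (hφf : ∀ a ∈ Set.range f, ∀ x, a < φ x)
    {x y : ↥(S ∪ (fun y => y + r) '' S)} (hx : x.1 ∈ S) (hy : y.1 ∉ S) :
    shiftExtend f φ x < shiftExtend f φ y := by
  rw [shiftExtend_of_mem f φ hx, shiftExtend_of_notMem f φ hy]
  exact hφf _ ⟨_, rfl⟩ _

lemma shiftExtend_injective (hf : Function.Injective f) (hφ : Set.InjOn φ (Set.range f))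
    (hφf : ∀ a ∈ Set.range f, ∀ x, a < φ x) : Function.Injective (shiftExtend (r := r) f φ) := by
  intro x y hxy
  by_cases hx : x.1 ∈ S <;> by_cases hy : y.1 ∈ S
  · rw [shiftExtend_of_mem f φ hx, shiftExtend_of_mem f φ hy] at hxy
    exact Subtype.ext (Subtype.mk.inj (hf hxy))
  · exact absurd hxy (shiftExtend_lt_shiftExtend hφf hx hy).ne
  · exact absurd hxy (shiftExtend_lt_shiftExtend hφf hy hx).ne'
  · rw [shiftExtend_of_notMem f φ hx, shiftExtend_of_notMem f φ hy] at hxy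
    exact Subtype.ext (sub_left_injective (Subtype.mk.inj (hf (hφ ⟨_, rfl⟩ ⟨_, rfl⟩ hxy))))

theorem IsBinary_s18.shiftExtend (hord : ∀ a ∈ S, ∀ b ∈ S, ord2 r < ord2 (a - b)) (hf : IsBinary_s18 f)
    (hφ : StrictMonoOn φ (Set.range f)) (hφf : ∀ a ∈ Set.range f, ∀ x, a < φ x) :
    IsBinary_s18 (shiftExtend (r := r) f φ) := by
  refine ⟨shiftExtend_injective hf.1 hφ.injOn hφf, ?_⟩
  rintro ⟨a, b, c, hab, hbc, heq⟩
  by_cases hb : b.1 ∈ S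
  · have ha : a.1 ∈ S := by_contra fun ha => (shiftExtend_lt_shiftExtend hφf hb ha).not_gt hab
    by_cases hc : c.1 ∈ S
    · rw [shiftExtend_of_mem f φ ha, shiftExtend_of_mem f φ hb] at hab
      rw [shiftExtend_of_mem f φ hb, shiftExtend_of_mem f φ hc] at hbc
      exact hf.2 ⟨_, _, _, hab, hbc, heq⟩
    · have hlt := hord _ hb _ ha
      rw [heq, ord2_sub_eq_of_sub_mem hord (sub_mem_of_mem_union_image_add c.2 hc) hb] at hlt
      exact lt_irrefl _ hlt
  · have hc : c.1 ∉ S := fun hc => (shiftExtend_lt_shiftExtend hφf hc hb).not_gt hbc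
    have hb' := sub_mem_of_mem_union_image_add b.2 hb
    have hc' := sub_mem_of_mem_union_image_add c.2 hc
    by_cases ha : a.1 ∈ S
    · have hlt := hord _ hc' _ hb'
      rw [sub_sub_sub_cancel_right, ← heq, ord2_sub_eq_of_sub_mem hord hb' ha] at hlt
      exact lt_irrefl _ hlt
    · rw [shiftExtend_of_notMem f φ ha, shiftExtend_of_notMem f φ hb] at hab
      rw [shiftExtend_of_notMem f φ hb, shiftExtend_of_notMem f φ hc] at hbc
      refine hf.2 ⟨_, _, _, (hφ.lt_iff_lt ⟨_, rfl⟩ ⟨_, rfl⟩).1 hab,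
        (hφ.lt_iff_lt ⟨_, rfl⟩ ⟨_, rfl⟩).1 hbc, ?_⟩
      simpa only [sub_sub_sub_cancel_right] using heq

end ShiftExtend

end

theorem stmt_18_general {X : Type*} [LinearOrder X] (hmax : ¬ ∃ m : X, ∀ x : X, x ≤ m)
    (S : Set ℚ) (hfin : S.Finite) (r : ℚ)
    (hord : ∀ a ∈ S, ∀ b ∈ S, ord2 r < ord2 (a - b))
    (f : S → X)
    (hbin : Function.Injective f ∧
      ¬ ∃ a b c : S, f a < f b ∧ f b < f c ∧
        ord2 ((b : ℚ) - (a : ℚ)) = ord2 ((c : ℚ) - (b : ℚ))) :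
    ∃ g : ↥(S ∪ (fun y => y + r) '' S) → X,
      (Function.Injective g ∧
        ¬ ∃ a b c : ↥(S ∪ (fun y => y + r) '' S), g a < g b ∧ g b < g c ∧
          ord2 ((b : ℚ) - (a : ℚ)) = ord2 ((c : ℚ) - (b : ℚ))) ∧
      (∀ (a : ℚ) (ha : a ∈ S), g ⟨a, Set.mem_union_left _ ha⟩ = f ⟨a, ha⟩) := by
  have : NoMaxOrder X := ⟨by simpa using hmax⟩
  have : Finite S := hfin
  obtain ⟨φ, hφ, hφf⟩ := (Set.finite_range f).exists_strictMonoOn_above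
  exact ⟨shiftExtend f φ, IsBinary_s18.shiftExtend hord hbin hφ hφf,
    fun a ha => shiftExtend_of_mem f φ ha⟩

/-- Let (X, ⪯) be a totally ordered set without a maximum. Let S ⊆ ℚ be
finite and r ∈ ℚ, r ≠ 0, with ord₂(a − b) > ord₂(r) for all a, b ∈ S. If f : S → X is
binary, then there exists a binary map g : S ∪ (S + r) → X whose restriction to S
equals f. -/
theorem stmt_18 {X : Type*} [LinearOrder X] (hmax : ¬ ∃ m : X, ∀ x : X, x ≤ m)
    (S : Set ℚ) (hfin : S.Finite) (r : ℚ) (hr : r ≠ 0)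
    (hord : ∀ a ∈ S, ∀ b ∈ S, ord2 r < ord2 (a - b))
    (f : S → X)
    (hbin : Function.Injective f ∧
      ¬ ∃ a b c : S, f a < f b ∧ f b < f c ∧
        ord2 ((b : ℚ) - (a : ℚ)) = ord2 ((c : ℚ) - (b : ℚ))) :
    ∃ g : ↥(S ∪ (fun y => y + r) '' S) → X,
      (Function.Injective g ∧
        ¬ ∃ a b c : ↥(S ∪ (fun y => y + r) '' S), g a < g b ∧ g b < g c ∧
          ord2 ((b : ℚ) - (a : ℚ)) = ord2 ((c : ℚ) - (b : ℚ))) ∧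
      (∀ (a : ℚ) (ha : a ∈ S), g ⟨a, Set.mem_union_left _ ha⟩ = f ⟨a, ha⟩) :=
  stmt_18_general hmax S hfin r hord f hbin
end
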